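/- arXiv:1903.08865 — 11 statements merged into one kernel-verified Lean document; each statement's English description precedes it below -/
import Mathlib

section
/- Let c ∈ ℚ and suppose the set Per(φ_c) of rational periodic points of φ_c(x) = x² − c is nonempty. Then den(c) = d² for some natural number d, and den(x) = d for every rational preperiodic point x of φ_c. -/
private lemma den_val_max {p : ℕ} [hp : Fact p.Prime] (q : ℚ) :
    (padicValNat p q.den : ℤ) = max (-(padicValRat p q)) 0 := by
  by_cases hb : padicValNat p q.den = 0
  · have hv : padicValRat p q = padicValInt p q.num := by
      rw [padicValRat_def, hb]; simp
    rw [hb, hv]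
    have : (0 : ℤ) ≤ padicValInt p q.num := Int.natCast_nonneg _
    omega
  · have hdvd : p ∣ q.den := dvd_of_one_le_padicValNat (by omega)
    have hnum : ¬ (p : ℤ) ∣ q.num := by
      intro hd
      have h1 : p ∣ q.num.natAbs := Int.natCast_dvd.mp hd
      have := Nat.dvd_gcd h1 hdvd
      rw [Nat.Coprime.gcd_eq_one q.reduced] at this
      exact hp.out.one_lt.ne' (Nat.dvd_one.mp this)
    have hv : padicValRat p q = -(padicValNat p q.den : ℤ) := by
      rw [padicValRat_def, padicValInt.eq_zero_of_not_dvd hnum]; omega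
    rw [hv]
    omega

private lemma den_val_add {p : ℕ} [hp : Fact p.Prime] {u w : ℚ}
    (h : padicValNat p u.den < padicValNat p w.den) :
    padicValNat p (u + w).den = padicValNat p w.den := by
  have hw := den_val_max (p := p) w
  have hu := den_val_max (p := p) u
  have hvw : padicValRat p w = -(padicValNat p w.den : ℤ) := by omega
  have hvlt : padicValRat p w < padicValRat p u := by omega
  have hw0 : w ≠ 0 := by
    rintro rfl
    simp at h
  by_cases hu0 : u = 0
  · simp [hu0]
  have hsum : w + u ≠ 0 := by
    intro hs
    have : w = -u := by linarith
    rw [this, padicValRat.neg] at hvlt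
    exact lt_irrefl _ hvlt
  have hval : padicValRat p (w + u) = padicValRat p w :=
    padicValRat.add_eq_of_lt hsum hw0 hu0 hvlt
  have hfin := den_val_max (p := p) (w + u)
  rw [hval, hvw, neg_neg, max_eq_left (Int.natCast_nonneg _)] at hfin
  rw [add_comm u w]
  omega

private lemma den_val_sq {p : ℕ} [hp : Fact p.Prime] (x : ℚ) :
    padicValNat p (x ^ 2).den = 2 * padicValNat p x.den := by
  have : (x ^ 2).den = x.den ^ 2 := by
    rw [pow_two, pow_two, Rat.mul_self_den]
  rw [this, padicValNat.pow x.den 2]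

private lemma den_val_step {p : ℕ} [hp : Fact p.Prime] (c x : ℚ)
    (h : 2 * padicValNat p x.den ≠ padicValNat p c.den) :
    padicValNat p (x ^ 2 - c).den =
      max (2 * padicValNat p x.den) (padicValNat p c.den) := by
  have hnc : padicValNat p (-c).den = padicValNat p c.den := by
    rw [Rat.neg_den]
  have hsq := den_val_sq (p := p) x
  rw [sub_eq_add_neg]
  rcases lt_or_gt_of_ne h with hlt | hgt
  · rw [den_val_add (u := x ^ 2) (w := -c) (by omega), hnc]
    omega
  · rw [add_comm, den_val_add (u := -c) (w := x ^ 2) (by omega), hsq]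
    omega

private lemma den_val_growth {p : ℕ} [hp : Fact p.Prime] (c x : ℚ) (k : ℕ)
    (hk : padicValNat p c.den < 2 * padicValNat p ((fun y : ℚ => y ^ 2 - c)^[k] x).den) :
    ∀ j : ℕ, padicValNat p ((fun y : ℚ => y ^ 2 - c)^[k] x).den + j ≤
      padicValNat p ((fun y : ℚ => y ^ 2 - c)^[k + j] x).den ∧
      padicValNat p c.den < 2 * padicValNat p ((fun y : ℚ => y ^ 2 - c)^[k + j] x).den := by
  intro j
  induction j with
  | zero => simp only [Nat.add_zero]; exact ⟨le_refl _, hk⟩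
  | succ j ih =>
    obtain ⟨ih1, ih2⟩ := ih
    have hstep : padicValNat p ((fun y : ℚ => y ^ 2 - c)^[k + (j + 1)] x).den =
        max (2 * padicValNat p ((fun y : ℚ => y ^ 2 - c)^[k + j] x).den)
          (padicValNat p c.den) := by
      have h1 : k + (j + 1) = (k + j) + 1 := rfl
      rw [h1, Function.iterate_succ_apply']
      exact den_val_step c _ (by omega)
    omega

private lemma den_val_preper {p : ℕ} [hp : Fact p.Prime] (c x : ℚ)
    (hx : ∃ m : ℕ, ∃ n : ℕ, 1 ≤ n ∧
        (fun y : ℚ => y ^ 2 - c)^[n] ((fun y : ℚ => y ^ 2 - c)^[m] x) =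
          (fun y : ℚ => y ^ 2 - c)^[m] x) :
    2 * padicValNat p x.den = padicValNat p c.den := by
  obtain ⟨m, n, hn, hper⟩ := hx
  have hrep : ∀ t : ℕ, (fun y : ℚ => y ^ 2 - c)^[m + t * n] x =
      (fun y : ℚ => y ^ 2 - c)^[m] x := by
    intro t
    induction t with
    | zero => simp
    | succ t ih =>
      have h1 : m + (t + 1) * n = n + (m + t * n) := by ring
      rw [h1, Function.iterate_add_apply, ih, hper]
  by_contra hne
  have hk : ∃ k : ℕ, k ≤ 1 ∧ padicValNat p c.den <
      2 * padicValNat p ((fun y : ℚ => y ^ 2 - c)^[k] x).den := by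
    rcases lt_or_gt_of_ne hne with hlt | hgt
    · refine ⟨1, le_refl 1, ?_⟩
      have hB1 : padicValNat p ((fun y : ℚ => y ^ 2 - c)^[1] x).den =
          max (2 * padicValNat p x.den) (padicValNat p c.den) := by
        rw [Function.iterate_one]
        exact den_val_step c x (by omega)
      omega
    · exact ⟨0, by omega, by simpa using hgt⟩
  obtain ⟨k, hk1, hka⟩ := hk
  have hgrow := den_val_growth c x k hka
  set B := padicValNat p ((fun y : ℚ => y ^ 2 - c)^[m] x).den with hBm
  set t := B + 2 with ht
  have htn : t ≤ t * n := Nat.le_mul_of_pos_right t (by omega)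
  have hidx : k + (m + t * n - k) = m + t * n := by omega
  have h1 := (hgrow (m + t * n - k)).1
  rw [hidx] at h1
  have h2 : padicValNat p ((fun y : ℚ => y ^ 2 - c)^[m + t * n] x).den = B := by
    rw [hrep t]
  omega

/-- If the quadratic map `φ_c(x) = x² - c` has a rational periodic point, then
`den(c) = d²` for some natural number `d`, and every rational preperiodic point
of `φ_c` has denominator `d`. -/
theorem stmt_0 (c : ℚ)
    (h : ∃ x : ℚ, ∃ n : ℕ, 1 ≤ n ∧ (fun y : ℚ => y ^ 2 - c)^[n] x = x) :
    ∃ d : ℕ, c.den = d ^ 2 ∧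
      ∀ x : ℚ, (∃ m : ℕ, ∃ n : ℕ, 1 ≤ n ∧
          (fun y : ℚ => y ^ 2 - c)^[n] ((fun y : ℚ => y ^ 2 - c)^[m] x) =
            (fun y : ℚ => y ^ 2 - c)^[m] x) →
        x.den = d := by
  obtain ⟨x₀, n₀, hn₀, hx₀⟩ := h
  have hx₀pre : ∃ m : ℕ, ∃ n : ℕ, 1 ≤ n ∧
      (fun y : ℚ => y ^ 2 - c)^[n] ((fun y : ℚ => y ^ 2 - c)^[m] x₀) =
        (fun y : ℚ => y ^ 2 - c)^[m] x₀ := ⟨0, n₀, hn₀, by simpa using hx₀⟩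
  refine ⟨x₀.den, ?_, ?_⟩
  · rw [Nat.eq_iff_prime_padicValNat_eq _ _ c.den_ne_zero
      (pow_ne_zero 2 x₀.den_ne_zero)]
    intro p hp
    haveI : Fact p.Prime := ⟨hp⟩
    rw [padicValNat.pow x₀.den 2, ← den_val_preper c x₀ hx₀pre]
  · intro x hx
    rw [Nat.eq_iff_prime_padicValNat_eq _ _ x.den_ne_zero x₀.den_ne_zero]
    intro p hp
    haveI : Fact p.Prime := ⟨hp⟩
    have h1 := den_val_preper (p := p) c x hx
    have h2 := den_val_preper (p := p) c x₀ hx₀pre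
    omega
end

section
/- Let A be an integral domain, c ∈ A, and f : A → A defined by f(x) = x² − c. Let x, y ∈ A be two distinct periodic points of f, of periods m and n respectively, and let r = lcm(m, n). Then ∏_{i=0}^{r−1} (f^i(x) + f^i(y)) = 1. -/
/-- If `f(x) = x² - c` on an integral domain, and `x ≠ y` are periodic points of
`f` of (least) periods `m` and `n`, then with `r = lcm m n` one has
`∏_{i=0}^{r-1} (f^i(x) + f^i(y)) = 1`. -/
theorem stmt_2 {A : Type*} [CommRing A] [IsDomain A] (c : A)
    (f : A → A) (hf : ∀ t : A, f t = t ^ 2 - c)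
    (x y : A) (hxy : x ≠ y) (m n : ℕ) (hm1 : 1 ≤ m) (hn1 : 1 ≤ n)
    (hm : Function.minimalPeriod f x = m)
    (hn : Function.minimalPeriod f y = n) :
    ∏ i ∈ Finset.range (Nat.lcm m n), (f^[i] x + f^[i] y) = 1 := by
  have key : ∀ k : ℕ, f^[k] x - f^[k] y
      = (x - y) * ∏ i ∈ Finset.range k, (f^[i] x + f^[i] y) := by
    intro k
    induction k with
    | zero => simp
    | succ k ih =>
      rw [Finset.prod_range_succ, Function.iterate_succ_apply',
        Function.iterate_succ_apply', hf, hf, ← mul_assoc, ← ih]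
      ring
  have hx : f^[Nat.lcm m n] x = x := by
    obtain ⟨k, hk⟩ := Nat.dvd_lcm_left m n
    rw [hk, ← hm]
    exact (Function.isPeriodicPt_minimalPeriod f x).mul_const k
  have hy : f^[Nat.lcm m n] y = y := by
    obtain ⟨k, hk⟩ := Nat.dvd_lcm_right m n
    rw [hk, ← hn]
    exact (Function.isPeriodicPt_minimalPeriod f y).mul_const k
  have h := key (Nat.lcm m n)
  rw [hx, hy] at h
  have h2 : (x - y) * (∏ i ∈ Finset.range (Nat.lcm m n), (f^[i] x + f^[i] y) - 1) = 0 := by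
    rw [mul_sub, ← h]; ring
  rcases mul_eq_zero.mp h2 with h3 | h3
  · exact absurd (sub_eq_zero.mp h3) hxy
  · exact sub_eq_zero.mp h3
end

section
/- Let A be an integral domain, c ∈ A, and f : A → A defined by f(x) = x² − c. Suppose the set of periodic points of f in A is finite, equal to {x₁, x₂, …, x_N} (with the x_i pairwise distinct) and nonempty. Then ∏_{1≤i<j≤N} (x_i + x_j) = 1 or ∏_{1≤i<j≤N} (x_i + x_j) = −1. -/
open Finset in
/-- Permutation invariance of the "all ordered pairs" difference product. -/
lemma perm_offdiag_prod {A : Type*} [CommRing A] {N : ℕ}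
    (σ : Equiv.Perm (Fin N)) (y : Fin N → A) :
    ∏ i : Fin N, ∏ j ∈ {i}ᶜ, (y (σ j) - y (σ i)) =
      ∏ i : Fin N, ∏ j ∈ {i}ᶜ, (y j - y i) := by
  have h1 : ∀ i : Fin N, ∏ j ∈ ({i}ᶜ : Finset (Fin N)), (y (σ j) - y (σ i)) =
      ∏ j ∈ ({σ i}ᶜ : Finset (Fin N)), (y j - y (σ i)) := by
    intro i
    refine Finset.prod_nbij' σ σ.symm ?_ ?_ ?_ ?_ ?_ <;>
      simp [Equiv.eq_symm_apply, eq_comm]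
  simp_rw [h1]
  exact Equiv.prod_comp σ (fun k => ∏ j ∈ ({k}ᶜ : Finset (Fin N)), (y j - y k))

/-- If `f(x) = x² - c` on an integral domain has a finite, nonempty set of
periodic points `{x 1, …, x N}` (pairwise distinct), then
`∏_{1 ≤ i < j ≤ N} (x i + x j) = ± 1`. -/
theorem stmt_3 {A : Type*} [CommRing A] [IsDomain A] (c : A)
    (f : A → A) (hf : ∀ t : A, f t = t ^ 2 - c)
    (N : ℕ) (hN : 1 ≤ N) (x : Fin N → A) (hinj : Function.Injective x)
    (hrange : Set.range x = {z : A | ∃ n : ℕ, 1 ≤ n ∧ f^[n] z = z}) :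
    (∏ i : Fin N, ∏ j ∈ Finset.Ioi i, (x i + x j)) = 1 ∨
      (∏ i : Fin N, ∏ j ∈ Finset.Ioi i, (x i + x j)) = -1 := by
  classical
  -- Every `f (x i)` is again a periodic point, hence some `x j`.
  have hstep : ∀ i : Fin N, ∃ j : Fin N, f (x i) = x j := by
    intro i
    have hxi : x i ∈ Set.range x := ⟨i, rfl⟩
    rw [hrange] at hxi
    obtain ⟨n, hn1, hn⟩ := hxi
    have hmem : f (x i) ∈ {z : A | ∃ n : ℕ, 1 ≤ n ∧ f^[n] z = z} :=
      ⟨n, hn1, by rw [← Function.iterate_succ_apply, Function.iterate_succ_apply', hn]⟩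
    rw [← hrange] at hmem
    obtain ⟨j, hj⟩ := hmem
    exact ⟨j, hj.symm⟩
  choose τ hτ using hstep
  -- `τ` is surjective, hence a permutation.
  have hτsurj : Function.Surjective τ := by
    intro j
    have hxj : x j ∈ Set.range x := ⟨j, rfl⟩
    rw [hrange] at hxj
    obtain ⟨n, hn1, hn⟩ := hxj
    have hper : f^[n - 1] (x j) ∈ {z : A | ∃ n : ℕ, 1 ≤ n ∧ f^[n] z = z} :=
      ⟨n, hn1, by
        rw [← Function.iterate_add_apply, add_comm, Function.iterate_add_apply, hn]⟩
    rw [← hrange] at hper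
    obtain ⟨i, hi⟩ := hper
    refine ⟨i, hinj ?_⟩
    have h1 := Function.iterate_succ_apply' f (n - 1) (x j)
    rw [Nat.succ_eq_add_one, Nat.sub_add_cancel hn1, hn] at h1
    rw [← hτ i, hi]
    exact h1.symm
  have hτbij : Function.Bijective τ := Finite.surjective_iff_bijective.mp hτsurj
  set σ : Equiv.Perm (Fin N) := Equiv.ofBijective τ hτbij with hσ
  have hσapp : ∀ i, x (σ i) = f (x i) := fun i => (hτ i).symm
  -- Key product identities
  set Q := ∏ i : Fin N, ∏ j ∈ Finset.Ioi i, (x i + x j) with hQ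
  set D := ∏ i : Fin N, ∏ j ∈ Finset.Ioi i, ((x j - x i) * (x i - x j)) with hD
  have key : D * Q ^ 2 = D := by
    have e1 : ∏ i : Fin N, ∏ j ∈ Finset.Ioi i, ((x (σ j) - x (σ i)) * (x (σ i) - x (σ j)))
        = ∏ i : Fin N, ∏ j ∈ Finset.Ioi i, ((x j - x i) * (x i - x j)) := by
      rw [Finset.prod_prod_Ioi_mul_eq_prod_prod_off_diag (fun j i => x (σ j) - x (σ i)),
        Finset.prod_prod_Ioi_mul_eq_prod_prod_off_diag (fun j i => x j - x i)]
      convert perm_offdiag_prod σ x using 2 <;> congr!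
    have e2 : ∀ i j : Fin N,
        (x (σ j) - x (σ i)) * (x (σ i) - x (σ j))
          = ((x j - x i) * (x i - x j)) * ((x i + x j) * (x i + x j)) := by
      intro i j
      rw [hσapp, hσapp, hf, hf]
      ring
    calc D * Q ^ 2
        = ∏ i : Fin N, ∏ j ∈ Finset.Ioi i,
            (((x j - x i) * (x i - x j)) * ((x i + x j) * (x i + x j))) := by
          rw [hD, hQ, sq, ← Finset.prod_mul_distrib, ← Finset.prod_mul_distrib]
          refine Finset.prod_congr rfl fun i _ => ?_
          rw [← Finset.prod_mul_distrib, ← Finset.prod_mul_distrib]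
      _ = ∏ i : Fin N, ∏ j ∈ Finset.Ioi i, ((x (σ j) - x (σ i)) * (x (σ i) - x (σ j))) := by
          refine Finset.prod_congr rfl fun i _ => Finset.prod_congr rfl fun j _ => ?_
          rw [e2]
      _ = D := by rw [e1, hD]
  have hD0 : D ≠ 0 := by
    rw [hD]
    refine Finset.prod_ne_zero_iff.mpr fun i _ => Finset.prod_ne_zero_iff.mpr fun j hj => ?_
    have hij : j ≠ i := (Finset.mem_Ioi.mp hj).ne'
    exact mul_ne_zero (sub_ne_zero.mpr fun h => hij (hinj h))
      (sub_ne_zero.mpr fun h => hij.symm (hinj h))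
  have hQ2 : Q ^ 2 = 1 := by
    have := key
    nth_rewrite 2 [← mul_one D] at this
    exact mul_left_cancel₀ hD0 this
  rw [sq] at hQ2
  exact mul_self_eq_one_iff.mp hQ2
end

section
/- Let c ∈ ℚ and let (x₁, …, xₙ) be a cycle of φ_c of length n ≥ 1, i.e. the x_i are pairwise distinct rational numbers with φ_c(x_i) = x_{i+1} for 1 ≤ i < n and φ_c(xₙ) = x₁. Let d = den(x₁) and X_i = num(x_i) for all i. Then for every k with 1 ≤ k ≤ n − 1, ∏_{i=1}^{n} (X_i + X_{i+k}) = dⁿ, where indices are read modulo n. -/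
open Finset

private lemma denval (p : ℕ) [hp : Fact p.Prime] (q : ℚ) :
    padicValNat p q.den = (-(padicValRat p q)).toNat := by
  by_cases hq : q = 0
  · simp [hq]
  rw [padicValRat_def]
  by_cases hpd : p ∣ q.den
  · have hna : ¬ (p:ℤ) ∣ q.num := by
      intro h
      have h0 : p ∣ q.num.natAbs := by
        rw [← Int.natAbs_natCast p]; exact Int.natAbs_dvd_natAbs.mpr h
      have h1 : p ∣ Nat.gcd q.num.natAbs q.den := Nat.dvd_gcd h0 hpd
      rw [q.reduced] at h1
      exact hp.out.one_lt.ne' (Nat.eq_one_of_dvd_one h1)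
    have hnum : padicValInt p q.num = 0 := padicValInt.eq_zero_of_not_dvd hna
    omega
  · have hden : padicValNat p q.den = 0 := padicValNat.eq_zero_of_not_dvd hpd
    omega

private lemma dens_eq (c : ℚ) (n : ℕ) (hn : 1 ≤ n) (x : ℕ → ℚ)
    (hcyc : ∀ i, i < n → (x i) ^ 2 - c = x ((i + 1) % n)) :
    ∀ i, i < n → (x i).den = (x 0).den := by
  intro i hi
  rw [Nat.eq_iff_prime_padicValNat_eq _ _ (x i).pos.ne' (x 0).pos.ne']
  intro p hp
  haveI : Fact p.Prime := ⟨hp⟩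
  rw [denval, denval]
  set v : ℕ → ℤ := fun j => padicValRat p (x j) with hv
  by_cases hall : ∀ j, j < n → 0 ≤ v j
  · have h1 := hall i hi
    have h2 := hall 0 hn
    simp only [hv] at h1 h2
    omega
  · push_neg at hall
    obtain ⟨i₀, hi₀, hneg⟩ := hall
    have hne : (Finset.range n).Nonempty := ⟨0, Finset.mem_range.2 hn⟩
    set m := (Finset.range n).inf' hne v with hm
    have hmle : ∀ j, j < n → m ≤ v j := fun j hj =>
      Finset.inf'_le _ (Finset.mem_range.2 hj)
    have hm_neg : m < 0 := lt_of_le_of_lt (hmle i₀ hi₀) hneg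
    obtain ⟨i₁, hi₁mem, hmi₁⟩ := Finset.exists_mem_eq_inf' hne v
    have hi₁ : i₁ < n := Finset.mem_range.1 hi₁mem
    have hx₁ : x i₁ ≠ 0 := by
      intro h
      rw [hm] at hm_neg  -- keep
      have : v i₁ = 0 := by simp [hv, h]
      omega
    have hmeq : m = padicValRat p (x i₁) := hm.trans hmi₁
    have hsq : padicValRat p ((x i₁) ^ 2) = 2 * m := by
      rw [padicValRat.pow (x i₁), ← hmeq]; push_cast; ring
    have hj₁ : (i₁ + 1) % n < n := Nat.mod_lt _ (by omega)
    have hc : c = (x i₁) ^ 2 - x ((i₁ + 1) % n) := by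
      rw [← hcyc i₁ hi₁]; ring
    -- the valuation of c is 2 * m, and c ≠ 0
    have hvc : padicValRat p c = 2 * m ∧ c ≠ 0 := by
      by_cases hz : x ((i₁ + 1) % n) = 0
      · constructor
        · rw [hc, hz, sub_zero, hsq]
        · rw [hc, hz, sub_zero]; exact pow_ne_zero _ hx₁
      · have hcne : c ≠ 0 := by
          intro h0
          have : x ((i₁ + 1) % n) = (x i₁) ^ 2 := by
            rw [h0] at hc; linarith [hc]
          have hv1 : v ((i₁ + 1) % n) = 2 * m := by rw [hv]; simp only; rw [this, hsq]
          have := hmle _ hj₁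
          omega
        have hlt : padicValRat p ((x i₁) ^ 2) < padicValRat p (-(x ((i₁ + 1) % n))) := by
          rw [padicValRat.neg, hsq]
          have := hmle _ hj₁
          simp only [hv] at this
          omega
        have := padicValRat.add_eq_of_lt (p := p)
          (by rw [← sub_eq_add_neg, ← hc]; exact hcne)
          (pow_ne_zero _ hx₁) (neg_ne_zero.2 hz) hlt
        rw [← sub_eq_add_neg, ← hc] at this
        exact ⟨this.trans hsq, hcne⟩
    obtain ⟨hvc, hcne⟩ := hvc
    -- all valuations are equal to m
    have hall' : ∀ j, j < n → v j = m := by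
      intro j hj
      have hj' : (j + 1) % n < n := Nat.mod_lt _ (by omega)
      by_cases hzj : x j = 0
      · exfalso
        have hx' : x ((j + 1) % n) = -c := by rw [← hcyc j hj, hzj]; ring
        have : v ((j + 1) % n) = 2 * m := by
          simp only [hv]; rw [hx', padicValRat.neg, hvc]
        have := hmle _ hj'
        omega
      · by_contra hne'
        have hgt : m < v j := lt_of_le_of_ne (hmle j hj) (Ne.symm hne')
        have hsqj : padicValRat p ((x j) ^ 2) = 2 * v j := by
          rw [padicValRat.pow (x j)]; push_cast; rfl
        have hxj' : x ((j + 1) % n) ≠ 0 := by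
          intro h0
          have h1 : (x j) ^ 2 = c := by
            have := hcyc j hj; rw [h0] at this; linarith
          rw [h1, hvc] at hsqj
          omega
        have hlt2 : padicValRat p (-c) < padicValRat p ((x j) ^ 2) := by
          rw [padicValRat.neg, hvc, hsqj]; omega
        have hrew : -c + (x j) ^ 2 = x ((j + 1) % n) := by
          rw [← hcyc j hj]; ring
        have hfin := padicValRat.add_eq_of_lt (p := p)
          (q := -c) (r := (x j) ^ 2)
          (by rw [hrew]; exact hxj')
          (neg_ne_zero.2 hcne) (pow_ne_zero _ hzj) hlt2
        rw [hrew, padicValRat.neg, hvc] at hfin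
        have hle := hmle _ hj'
        simp only [hv] at hle
        omega
    have e1 := hall' i hi
    have e2 := hall' 0 hn
    simp only [hv] at e1 e2
    rw [e1, e2]

/-- Let `(x 0, …, x (n-1))` be a cycle of `φ_c(t) = t² - c` of length `n ≥ 1`,
`d = den(x 0)` and `X i = num(x i)`. Then for every `1 ≤ k ≤ n - 1`,
`∏_{i=0}^{n-1} (X i + X ((i+k) mod n)) = d^n`. -/
theorem stmt_4 (c : ℚ) (n : ℕ) (hn : 1 ≤ n) (x : ℕ → ℚ)
    (hdist : ∀ i j, i < n → j < n → i ≠ j → x i ≠ x j)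
    (hcyc : ∀ i, i < n → (x i) ^ 2 - c = x ((i + 1) % n))
    (k : ℕ) (hk1 : 1 ≤ k) (hk2 : k ≤ n - 1) :
    ∏ i ∈ Finset.range n, ((x i).num + (x ((i + k) % n)).num) = ((x 0).den : ℤ) ^ n := by
  have hd := dens_eq c n hn x hcyc
  set d : ℕ := (x 0).den with hdd
  have hdQ : (d : ℚ) ≠ 0 := Nat.cast_ne_zero.2 (x 0).pos.ne'
  have hkn : k < n := by omega
  have hmod : ∀ i, (i + k) % n < n := fun i => Nat.mod_lt _ (by omega)
  have hne_idx : ∀ i, i < n → i ≠ (i + k) % n := by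
    intro i hi h
    have h1 : (i + k) % n = i % n := by rw [← h, Nat.mod_eq_of_lt (h ▸ hmod i)]
    have h2 : n ∣ i + k - i := (Nat.modEq_iff_dvd' (Nat.le_add_right i k)).1 h1.symm
    rw [Nat.add_sub_cancel_left] at h2
    have := Nat.le_of_dvd (by omega) h2
    omega
  set g : ℕ → ℚ := fun i => x i - x ((i + k) % n) with hg
  have hD : ∏ i ∈ Finset.range n, g i ≠ 0 := by
    rw [Finset.prod_ne_zero_iff]
    intro i hi
    exact sub_ne_zero.2
      (hdist i ((i + k) % n) (Finset.mem_range.1 hi) (hmod i) (hne_idx i (Finset.mem_range.1 hi)))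
  -- reindexing: product of g over shifted indices equals product of g
  have hshift : ∏ i ∈ Finset.range n, g ((i + 1) % n) = ∏ i ∈ Finset.range n, g i := by
    apply Finset.prod_nbij' (i := fun a => (a + 1) % n) (j := fun a => (a + (n - 1)) % n)
    · intro a ha; exact Finset.mem_range.2 (Nat.mod_lt _ (by omega))
    · intro a ha; exact Finset.mem_range.2 (Nat.mod_lt _ (by omega))
    · intro a ha
      have h1 : ((a + 1) % n + (n - 1)) % n = (a + 1 + (n - 1)) % n := Nat.mod_add_mod _ _ _
      have h2 : a + 1 + (n - 1) = a + n := by omega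
      rw [h1, h2, Nat.add_mod_right, Nat.mod_eq_of_lt (Finset.mem_range.1 ha)]
    · intro a ha
      have h1 : ((a + (n - 1)) % n + 1) % n = (a + (n - 1) + 1) % n := Nat.mod_add_mod _ _ _
      have h2 : a + (n - 1) + 1 = a + n := by omega
      rw [h1, h2, Nat.add_mod_right, Nat.mod_eq_of_lt (Finset.mem_range.1 ha)]
    · intro a ha; rfl
  -- the key telescoping identity
  have hDP : (∏ i ∈ Finset.range n, g i) * ∏ i ∈ Finset.range n, (x i + x ((i + k) % n)) =
      ∏ i ∈ Finset.range n, g i := by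
    rw [← Finset.prod_mul_distrib]
    have : ∀ i ∈ Finset.range n,
        g i * (x i + x ((i + k) % n)) = g ((i + 1) % n) := by
      intro i hi
      have hi' := Finset.mem_range.1 hi
      have e1 : g i * (x i + x ((i + k) % n)) =
          ((x i) ^ 2 - c) - ((x ((i + k) % n)) ^ 2 - c) := by simp only [hg]; ring
      rw [e1, hcyc i hi', hcyc _ (hmod i)]
      have e2 : ((i + k) % n + 1) % n = ((i + 1) % n + k) % n := by
        rw [Nat.mod_add_mod, Nat.mod_add_mod]
        congr 1
        omega
      simp only [hg, e2]
    rw [Finset.prod_congr rfl this, hshift]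
  have hP : ∏ i ∈ Finset.range n, (x i + x ((i + k) % n)) = 1 :=
    mul_left_cancel₀ hD (by rw [hDP, mul_one])
  -- convert to numerators
  have hnum : ∀ i, i < n → ((x i).num : ℚ) = x i * (d : ℚ) := by
    intro i hi
    have h1 : ((x i).den : ℚ) = (d : ℚ) := by exact_mod_cast congrArg Nat.cast (hd i hi)
    rw [← h1]
    exact_mod_cast (Rat.num_div_den (x i)) ▸ (div_mul_cancel₀ ((x i).num : ℚ)
      (Nat.cast_ne_zero.2 (x i).pos.ne')).symm
  have hcast : ((∏ i ∈ Finset.range n, ((x i).num + (x ((i + k) % n)).num) : ℤ) : ℚ)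
      = ((d : ℤ) ^ n : ℤ) := by
    push_cast
    calc ∏ i ∈ Finset.range n, (((x i).num : ℚ) + ((x ((i + k) % n)).num : ℚ))
        = ∏ i ∈ Finset.range n, ((x i + x ((i + k) % n)) * (d : ℚ)) := by
          apply Finset.prod_congr rfl
          intro i hi
          rw [hnum i (Finset.mem_range.1 hi), hnum _ (hmod i)]
          ring
      _ = (∏ i ∈ Finset.range n, (x i + x ((i + k) % n))) * (d : ℚ) ^ n := by
          rw [Finset.prod_mul_distrib, Finset.prod_const, Finset.card_range]
      _ = (d : ℚ) ^ n := by rw [hP, one_mul]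
  exact_mod_cast hcast
end

section
/- Let c ∈ ℚ and suppose the set of rational periodic points of φ_c is finite, nonempty, and equal to {x₁, x₂, …, xₙ} with the x_i pairwise distinct. Let d = den(x₁) and X_i = num(x_i) for all i. Then ∏_{1≤i<j≤n} (X_i + X_j) = d^{n(n−1)/2} or ∏_{1≤i<j≤n} (X_i + X_j) = −d^{n(n−1)/2}. -/
open Finset

/-- The periodicity predicate. -/
def IsPer (c z : ℚ) : Prop := ∃ m : ℕ, 1 ≤ m ∧ (fun y : ℚ => y ^ 2 - c)^[m] z = z

lemma IsPer.step {c z : ℚ} (h : IsPer c z) : IsPer c (z ^ 2 - c) := by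
  obtain ⟨m, hm, hz⟩ := h
  refine ⟨m, hm, ?_⟩
  have : (fun y : ℚ => y ^ 2 - c)^[m] ((fun y : ℚ => y ^ 2 - c) z)
      = (fun y : ℚ => y ^ 2 - c) ((fun y : ℚ => y ^ 2 - c)^[m] z) := by
    rw [← Function.iterate_succ_apply, Function.iterate_succ_apply']
  simpa [hz] using this

lemma IsPer.pre {c z : ℚ} (h : IsPer c z) : ∃ w : ℚ, IsPer c w ∧ w ^ 2 - c = z := by
  obtain ⟨m, hm, hz⟩ := h
  set f : ℚ → ℚ := fun y : ℚ => y ^ 2 - c with hf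
  refine ⟨f^[m - 1] z, ⟨m, hm, ?_⟩, ?_⟩
  · show f^[m] (f^[m-1] z) = f^[m-1] z
    rw [← Function.iterate_add_apply, add_comm, Function.iterate_add_apply, hz]
  · show f (f^[m-1] z) = z
    calc f (f^[m-1] z) = f^[m-1+1] z := (Function.iterate_succ_apply' f (m-1) z).symm
      _ = f^[m] z := by rw [Nat.sub_add_cancel hm]
      _ = z := hz

/-- if `0 ≤ v_p q` then `p` does not divide the denominator. -/
lemma padic_den_zero {p : ℕ} [hp : Fact p.Prime] {q : ℚ} (h : 0 ≤ padicValRat p q) :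
    padicValNat p q.den = 0 := by
  by_contra hne
  have hdvd : p ∣ q.den := (dvd_iff_padicValNat_ne_zero q.den_nz).2 hne
  have hnum : ¬ (p : ℤ) ∣ q.num := by
    intro hd
    have h2 : p ∣ q.num.natAbs := by
      have := Int.natAbs_dvd_natAbs.mpr hd; simpa using this
    exact hp.out.one_lt.ne' (Nat.eq_one_of_dvd_coprimes q.reduced h2 hdvd)
  have h0 : padicValInt p q.num = 0 := padicValInt.eq_zero_of_not_dvd hnum
  rw [padicValRat_def, h0] at h
  have : (1 : ℤ) ≤ padicValNat p q.den := by
    exact_mod_cast Nat.one_le_iff_ne_zero.2 hne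
  omega

/-- if `v_p q < 0` then the valuation of the denominator is `-v_p q`. -/
lemma padic_den_neg {p : ℕ} [hp : Fact p.Prime] {q : ℚ} (h : padicValRat p q < 0) :
    (padicValNat p q.den : ℤ) = -padicValRat p q := by
  by_cases hdvd : p ∣ q.den
  · have hnum : ¬ (p : ℤ) ∣ q.num := by
      intro hd
      have h2 : p ∣ q.num.natAbs := by
        have := Int.natAbs_dvd_natAbs.mpr hd; simpa using this
      exact hp.out.one_lt.ne' (Nat.eq_one_of_dvd_coprimes q.reduced h2 hdvd)
    rw [padicValRat_def, padicValInt.eq_zero_of_not_dvd hnum]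
    ring
  · have h0 : padicValNat p q.den = 0 := padicValNat.eq_zero_of_not_dvd hdvd
    rw [padicValRat_def, h0] at h
    simp only [Nat.cast_zero, sub_zero] at h
    exact absurd h (not_lt.2 (by positivity))

lemma den_eq (c : ℚ) (n : ℕ) (hn : 1 ≤ n) (x : Fin n → ℚ)
    (hstep : ∀ k : Fin n, ∃ l : Fin n, x l = (x k) ^ 2 - c)
    (i j : Fin n) : (x i).den = (x j).den := by
  rw [Nat.eq_iff_prime_padicValNat_eq _ _ (x i).den_nz (x j).den_nz]
  intro p hp
  haveI : Fact p.Prime := ⟨hp⟩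
  set v : Fin n → ℤ := fun k => padicValRat p (x k) with hv
  obtain ⟨k0, -, hk0⟩ := Finset.exists_min_image Finset.univ v ⟨i, Finset.mem_univ i⟩
  simp only [Finset.mem_univ, forall_true_left, true_implies] at hk0
  set V : ℤ := v k0 with hV
  -- valuation of each periodic point is at least V
  by_cases hVnn : 0 ≤ V
  · -- all valuations nonneg; all denominators have zero valuation
    rw [padic_den_zero (le_trans hVnn (hk0 i)), padic_den_zero (le_trans hVnn (hk0 j))]
  · push_neg at hVnn
    -- claim : all valuations equal V
    have hall : ∀ k, v k = V := by
      by_contra hcon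
      push_neg at hcon
      obtain ⟨k, hk⟩ := hcon
      have hkV : V < v k := lt_of_le_of_ne (hk0 k) (Ne.symm hk)
      have hz0 : x k0 ≠ 0 := by
        intro h0
        rw [hV, hv] at hVnn
        simp [h0] at hVnn
      have hz2 : padicValRat p ((x k0) ^ 2) = 2 * V := by
        rw [padicValRat.pow (x k0)]; rfl
      -- x k0 ^ 2 - c is periodic, so its valuation is ≥ V
      obtain ⟨l, hl⟩ := hstep k0
      have hlV : V ≤ padicValRat p ((x k0) ^ 2 - c) := by rw [← hl]; exact hk0 l
      -- hence v_p c = 2V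
      have hc0 : c ≠ 0 := by
        intro h0
        rw [h0, sub_zero, hz2] at hlV
        omega
      have hvc : padicValRat p c = 2 * V := by
        by_cases hceq : (x k0) ^ 2 = c
        · rw [← hceq, hz2]
        by_contra hne
        have := padicValRat.add_eq_min (p := p) (q := (x k0) ^ 2) (r := -c)
          (by rwa [← sub_eq_add_neg, sub_ne_zero]) (pow_ne_zero _ hz0) (neg_ne_zero.2 hc0)
          (by rw [padicValRat.neg, hz2]; omega)
        rw [← sub_eq_add_neg, padicValRat.neg, hz2] at this
        rw [this] at hlV
        have : min (2*V) (padicValRat p c) ≤ 2 * V := min_le_left _ _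
        omega
      -- now use w = x k with v k > V to derive a contradiction
      obtain ⟨l', hl'⟩ := hstep k
      have hl'V : V ≤ padicValRat p ((x k) ^ 2 - c) := by rw [← hl']; exact hk0 l'
      by_cases hw0 : x k = 0
      · rw [hw0] at hl'V
        simp only [ne_eq, OfNat.ofNat_ne_zero, not_false_eq_true, zero_pow, zero_sub,
          padicValRat.neg] at hl'V
        omega
      · have hw2 : padicValRat p ((x k) ^ 2) = 2 * v k := by
          rw [padicValRat.pow (x k)]; rfl
        have hne2 : padicValRat p ((x k) ^ 2) ≠ padicValRat p (-c) := by
          rw [padicValRat.neg, hw2, hvc]; omega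
        have hsub0 : (x k) ^ 2 - c ≠ 0 := by
          intro h0
          apply hne2
          rw [padicValRat.neg, ← (sub_eq_zero.mp h0)]
        have := padicValRat.add_eq_min (p := p) (q := (x k) ^ 2) (r := -c)
          (by rwa [← sub_eq_add_neg]) (pow_ne_zero _ hw0) (neg_ne_zero.2 hc0) hne2
        rw [← sub_eq_add_neg, padicValRat.neg, hw2, hvc] at this
        rw [this] at hl'V
        have h1 : min (2 * v k) (2 * V) = 2 * V := by omega
        omega
    -- conclude equal denominator valuations
    have hi : (padicValNat p (x i).den : ℤ) = -V := by
      have h1 : padicValRat p (x i) = V := hall i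
      rw [padic_den_neg (by omega), h1]
    have hj : (padicValNat p (x j).den : ℤ) = -V := by
      have h1 : padicValRat p (x j) = V := hall j
      rw [padic_den_neg (by omega), h1]
    omega

/-- If the set of rational periodic points of `φ_c(t) = t² - c` is finite and
nonempty, equal to `{x 1, …, x n}` with the `x i` pairwise distinct, and
`d` is their common denominator, `X i = num (x i)`, then
`∏_{1 ≤ i < j ≤ n} (X i + X j) = ± d^(n(n-1)/2)`. -/
theorem stmt_5 (c : ℚ) (n : ℕ) (hn : 1 ≤ n) (x : Fin n → ℚ)
    (hinj : Function.Injective x)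
    (hrange : Set.range x =
      {z : ℚ | ∃ m : ℕ, 1 ≤ m ∧ (fun y : ℚ => y ^ 2 - c)^[m] z = z}) :
    (∏ i : Fin n, ∏ j ∈ Finset.Ioi i, ((x i).num + (x j).num)) =
        ((x ⟨0, hn⟩).den : ℤ) ^ (n * (n - 1) / 2) ∨
      (∏ i : Fin n, ∏ j ∈ Finset.Ioi i, ((x i).num + (x j).num)) =
        -((x ⟨0, hn⟩).den : ℤ) ^ (n * (n - 1) / 2) := by
  have hrange' : ∀ z : ℚ, (z ∈ Set.range x) ↔ IsPer c z := by
    intro z; rw [hrange]; rfl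
  have hper : ∀ k : Fin n, IsPer c (x k) := fun k => (hrange' (x k)).1 ⟨k, rfl⟩
  have hstep : ∀ k : Fin n, ∃ l : Fin n, x l = (x k) ^ 2 - c := by
    intro k
    obtain ⟨l, hl⟩ := (hrange' _).2 (hper k).step
    exact ⟨l, hl⟩
  have hpre : ∀ l : Fin n, ∃ k : Fin n, (x k) ^ 2 - c = x l := by
    intro l
    obtain ⟨w, hw, hweq⟩ := (hper l).pre
    obtain ⟨k, hk⟩ := (hrange' w).2 hw
    exact ⟨k, by rw [hk, hweq]⟩
  -- the permutation σ
  have hstep2 := hstep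
  choose σ hσ using hstep2
  have hσsurj : Function.Surjective σ := by
    intro l
    obtain ⟨k, hk⟩ := hpre l
    exact ⟨k, hinj (by rw [hσ k, hk])⟩
  have hσbij : Function.Bijective σ := Finite.surjective_iff_bijective.mp hσsurj
  let e : Fin n ≃ Fin n := Equiv.ofBijective σ hσbij
  have he : ∀ k, x (e k) = (x k) ^ 2 - c := hσ
  -- products
  set s : Fin n → Fin n → ℚ := fun k l => if k = l then 1 else x k + x l with hs
  set t : Fin n → Fin n → ℚ := fun k l => if k = l then 1 else x k - x l with ht
  set D : ℚ := ∏ k : Fin n, ∏ l : Fin n, t k l with hD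
  have hD0 : D ≠ 0 := by
    rw [hD]
    apply Finset.prod_ne_zero_iff.2
    intro k _
    apply Finset.prod_ne_zero_iff.2
    intro l _
    by_cases hkl : k = l
    · simp [ht, hkl]
    · simp only [ht, if_neg hkl]
      exact sub_ne_zero.2 fun h => hkl (hinj h)
  -- reindexing by e
  have hre : ∀ g : Fin n → Fin n → ℚ, (∏ k : Fin n, ∏ l : Fin n, g (e k) (e l))
      = ∏ k : Fin n, ∏ l : Fin n, g k l := by
    intro g
    rw [Equiv.prod_comp e (fun k => ∏ l : Fin n, g k (e l))]
    exact Finset.prod_congr rfl fun k _ => Equiv.prod_comp e (g k)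
  have key : D = D * (∏ k : Fin n, ∏ l : Fin n, s k l) := by
    conv_lhs => rw [hD, ← hre t]
    have : ∀ k l : Fin n, t (e k) (e l) = t k l * s k l := by
      intro k l
      simp only [ht, hs, e.injective.eq_iff]
      by_cases hkl : k = l
      · simp [hkl]
      · rw [if_neg hkl, if_neg hkl, if_neg hkl, he, he]
        ring
    calc (∏ k : Fin n, ∏ l : Fin n, t (e k) (e l))
        = ∏ k : Fin n, ∏ l : Fin n, t k l * s k l :=
          Finset.prod_congr rfl fun k _ => Finset.prod_congr rfl fun l _ => this k l
      _ = D * (∏ k : Fin n, ∏ l : Fin n, s k l) := by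
          rw [hD, ← Finset.prod_mul_distrib]
          exact Finset.prod_congr rfl fun k _ => Finset.prod_mul_distrib
  have hA1 : (∏ k : Fin n, ∏ l : Fin n, s k l) = 1 := by
    have h := mul_left_cancel₀ hD0 ((mul_one D).symm.symm.trans key).symm
    exact h.symm ▸ rfl
  -- split the full product into lower and upper triangular parts
  set P : ℚ := ∏ k : Fin n, ∏ l ∈ Finset.Ioi k, (x k + x l) with hP
  have hsplit : (∏ k : Fin n, ∏ l : Fin n, s k l) = P * P := by
    have hrow : ∀ k : Fin n, (∏ l : Fin n, s k l)
        = (∏ l ∈ Finset.Iio k, (x k + x l)) * ∏ l ∈ Finset.Ioi k, (x k + x l) := by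
      intro k
      have hsub : (∏ l : Fin n, s k l) = ∏ l ∈ Finset.Iio k ∪ Finset.Ioi k, s k l := by
        refine (Finset.prod_subset (Finset.subset_univ _) ?_).symm
        intro l _ hl
        simp only [Finset.mem_union, Finset.mem_Iio, Finset.mem_Ioi, not_or, not_lt] at hl
        have : k = l := le_antisymm hl.1 hl.2
        simp [hs, this]
      rw [hsub, Finset.prod_union (by
        rw [Finset.disjoint_left]
        intro a ha ha'
        simp only [Finset.mem_Iio] at ha
        simp only [Finset.mem_Ioi] at ha'
        exact absurd (ha.trans ha') (lt_irrefl _))]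
      congr 1
      · refine Finset.prod_congr rfl fun l hl => ?_
        simp only [Finset.mem_Iio] at hl
        simp only [hs]
        rw [if_neg hl.ne']
      · refine Finset.prod_congr rfl fun l hl => ?_
        simp only [Finset.mem_Ioi] at hl
        simp only [hs]
        rw [if_neg hl.ne]
    have hlower : (∏ k : Fin n, ∏ l ∈ Finset.Iio k, (x k + x l)) = P := by
      rw [hP]
      rw [Finset.prod_comm' (t := fun k => Finset.Iio k) (t' := Finset.univ)
        (s' := fun l => Finset.Ioi l) (by
          intro a b
          simp [Finset.mem_Iio, Finset.mem_Ioi])]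
      exact Finset.prod_congr rfl fun l _ => Finset.prod_congr rfl fun k _ => add_comm _ _
    calc (∏ k : Fin n, ∏ l : Fin n, s k l)
        = ∏ k : Fin n, ((∏ l ∈ Finset.Iio k, (x k + x l)) * ∏ l ∈ Finset.Ioi k, (x k + x l)) :=
          Finset.prod_congr rfl fun k _ => hrow k
      _ = (∏ k : Fin n, ∏ l ∈ Finset.Iio k, (x k + x l))
            * ∏ k : Fin n, ∏ l ∈ Finset.Ioi k, (x k + x l) := Finset.prod_mul_distrib
      _ = P * P := by rw [hlower, hP]
  have hPpm : P = 1 ∨ P = -1 := mul_self_eq_one_iff.mp (hsplit ▸ hA1)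
  -- denominators
  set d : ℕ := (x ⟨0, hn⟩).den with hdd
  have hd : ∀ k : Fin n, (x k).den = d := fun k => den_eq c n hn x hstep k ⟨0, hn⟩
  have hnum : ∀ k : Fin n, ((x k).num : ℚ) = x k * (d : ℚ) := by
    intro k
    have hden0 : ((x k).den : ℚ) ≠ 0 := by exact_mod_cast (x k).den_nz
    have h1 : ((x k).num : ℚ) = x k * ((x k).den : ℚ) :=
      (div_eq_iff hden0).mp (Rat.num_div_den (x k))
    rw [h1, hd k]
  have hNsum : (∑ k : Fin n, (Finset.Ioi k).card) = n * (n - 1) / 2 := by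
    have h1 : (∑ k : Fin n, (Finset.Ioi k).card) = ∑ k : Fin n, (n - 1 - (k : ℕ)) := by
      exact Finset.sum_congr rfl fun k _ => Fin.card_Ioi k
    rw [h1, Fin.sum_univ_eq_sum_range (fun j => n - 1 - j) n]
    rw [Finset.sum_range_reflect (fun j => j) n, Finset.sum_range_id]
  have hcast : ((∏ i : Fin n, ∏ j ∈ Finset.Ioi i, ((x i).num + (x j).num) : ℤ) : ℚ)
      = (d : ℚ) ^ (n * (n - 1) / 2) * P := by
    push_cast
    calc (∏ i : Fin n, ∏ j ∈ Finset.Ioi i, (((x i).num : ℚ) + ((x j).num : ℚ)))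
        = ∏ i : Fin n, ∏ j ∈ Finset.Ioi i, ((d : ℚ) * (x i + x j)) := by
          refine Finset.prod_congr rfl fun i _ => Finset.prod_congr rfl fun j _ => ?_
          rw [hnum i, hnum j]; ring
      _ = ∏ i : Fin n, ((d : ℚ) ^ (Finset.Ioi i).card * ∏ j ∈ Finset.Ioi i, (x i + x j)) := by
          refine Finset.prod_congr rfl fun i _ => ?_
          rw [Finset.prod_mul_distrib, Finset.prod_const]
      _ = (∏ i : Fin n, (d : ℚ) ^ (Finset.Ioi i).card) * P := Finset.prod_mul_distrib
      _ = (d : ℚ) ^ (n * (n - 1) / 2) * P := by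
          rw [Finset.prod_pow_eq_pow_sum, hNsum]
  rcases hPpm with h1 | h1
  · left
    have : ((∏ i : Fin n, ∏ j ∈ Finset.Ioi i, ((x i).num + (x j).num) : ℤ) : ℚ)
        = (((d : ℤ) ^ (n * (n - 1) / 2) : ℤ) : ℚ) := by
      rw [hcast, h1, mul_one]; push_cast; ring
    exact_mod_cast this
  · right
    have : ((∏ i : Fin n, ∏ j ∈ Finset.Ioi i, ((x i).num + (x j).num) : ℤ) : ℚ)
        = ((-(d : ℤ) ^ (n * (n - 1) / 2) : ℤ) : ℚ) := by
      rw [hcast, h1]; push_cast; ring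
    exact_mod_cast this
end

section
/- Let c ∈ ℚ and let x, y be two distinct rational periodic points of φ_c. Set X = num(x), Y = num(y), and d = den(x). Then every prime dividing X + Y also divides d, and moreover X and Y are coprime. -/
private def Per (c x : ℚ) : Prop := ∃ n : ℕ, 1 ≤ n ∧ (fun t : ℚ => t ^ 2 - c)^[n] x = x

section
variable {p : ℕ} [hp : Fact p.Prime] {c : ℚ}

private lemma norm_sq (t : ℚ) : padicNorm p (t ^ 2) = padicNorm p t ^ 2 := by
  rw [sq, sq, padicNorm.mul]

private lemma grow {t : ℚ} (h : padicNorm p c < padicNorm p t ^ 2) :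
    padicNorm p (t ^ 2 - c) = padicNorm p t ^ 2 := by
  have h1 : padicNorm p (-c) ≠ padicNorm p (t ^ 2) := by
    rw [padicNorm.neg, norm_sq]; exact ne_of_lt h
  have := padicNorm.add_eq_max_of_ne (p := p) h1.symm
  rw [sub_eq_add_neg, this, padicNorm.neg, norm_sq,
    max_eq_left (le_of_lt h)]

private lemma aux_step {t : ℚ} (ht : max 1 (padicNorm p c) < padicNorm p t ^ 2) :
    padicNorm p t < padicNorm p (t ^ 2 - c) ∧
      max 1 (padicNorm p c) < padicNorm p (t ^ 2 - c) ^ 2 := by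
  have hc : padicNorm p c < padicNorm p t ^ 2 := lt_of_le_of_lt (le_max_right _ _) ht
  have h1 : (1:ℚ) < padicNorm p t ^ 2 := lt_of_le_of_lt (le_max_left _ _) ht
  have hg : padicNorm p (t ^ 2 - c) = padicNorm p t ^ 2 := grow hc
  have hnn : 0 ≤ padicNorm p t := padicNorm.nonneg t
  have ht1 : 1 < padicNorm p t := by nlinarith
  have hm1 : (1:ℚ) ≤ max 1 (padicNorm p c) := le_max_left _ _
  constructor
  · rw [hg]; nlinarith
  · rw [hg]; nlinarith

private lemma per_bound {x : ℚ} (h : Per c x) :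
    padicNorm p x ^ 2 ≤ max 1 (padicNorm p c) := by
  by_contra hlt
  push_neg at hlt
  have main : ∀ k : ℕ, max 1 (padicNorm p c) <
        padicNorm p ((fun t : ℚ => t ^ 2 - c)^[k] x) ^ 2 ∧
      padicNorm p x ≤ padicNorm p ((fun t : ℚ => t ^ 2 - c)^[k] x) := by
    intro k; induction k with
    | zero => exact ⟨hlt, le_refl _⟩
    | succ k ih =>
      have := aux_step ih.1
      rw [Function.iterate_succ_apply']
      exact ⟨this.2, le_trans ih.2 (le_of_lt this.1)⟩
  obtain ⟨n, hn, hfix⟩ := h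
  obtain ⟨m, rfl⟩ : ∃ m, n = m + 1 := ⟨n - 1, by omega⟩
  have h1 := (main m).2
  have h2 := (aux_step (main m).1).1
  rw [← Function.iterate_succ_apply' (fun t : ℚ => t ^ 2 - c) m x, hfix] at h2
  linarith

end


private lemma per_iterate {c x : ℚ} (h : Per c x) (k : ℕ) :
    Per c ((fun t : ℚ => t ^ 2 - c)^[k] x) := by
  obtain ⟨n, hn, hfix⟩ := h
  exact ⟨n, hn, by
    rw [← Function.iterate_add_apply, Nat.add_comm, Function.iterate_add_apply, hfix]⟩

private lemma per_common {c x y : ℚ} (hx : Per c x) (hy : Per c y) :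
    ∃ n : ℕ, 1 ≤ n ∧ (fun t : ℚ => t ^ 2 - c)^[n] x = x ∧
      (fun t : ℚ => t ^ 2 - c)^[n] y = y := by
  obtain ⟨n, hn, hfx⟩ := hx
  obtain ⟨m, hm, hfy⟩ := hy
  refine ⟨n * m, Nat.one_le_iff_ne_zero.2 (by positivity), ?_, ?_⟩
  · rw [Function.iterate_mul]
    exact Function.IsFixedPt.iterate hfx m
  · rw [Nat.mul_comm, Function.iterate_mul]
    exact Function.IsFixedPt.iterate hfy n

section
variable {p : ℕ} [hp : Fact p.Prime] {c : ℚ}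

private lemma normc_big {x : ℚ} (h : Per c x) (hx : 1 < padicNorm p x) :
    1 < padicNorm p c := by
  have hb := per_bound (p := p) h
  have : (1:ℚ) < max 1 (padicNorm p c) := by nlinarith
  rcases max_cases (1:ℚ) (padicNorm p c) with ⟨he, _⟩ | ⟨_, hlt⟩
  · rw [he] at this; linarith
  · exact hlt

private lemma normx_big {x : ℚ} (h : Per c x) (hc : 1 < padicNorm p c) :
    1 < padicNorm p x := by
  by_contra hle
  push_neg at hle
  have hnn : 0 ≤ padicNorm p x := padicNorm.nonneg x
  have hlt : padicNorm p (x ^ 2) < padicNorm p c := by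
    rw [norm_sq]; nlinarith
  have hne : padicNorm p (x ^ 2) ≠ padicNorm p (-c) := by
    rw [padicNorm.neg]; exact ne_of_lt hlt
  have heq : padicNorm p (x ^ 2 - c) = padicNorm p c := by
    rw [sub_eq_add_neg, padicNorm.add_eq_max_of_ne hne, padicNorm.neg]
    exact max_eq_right (le_of_lt hlt)
  have hper : Per c (x ^ 2 - c) := by
    have := per_iterate h 1
    simpa using this
  have := per_bound (p := p) hper
  rw [heq, max_eq_right (le_of_lt hc)] at this
  nlinarith

private lemma norm_eq_c {x : ℚ} (h : Per c x) (hx : 1 < padicNorm p x) :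
    padicNorm p x ^ 2 = padicNorm p c := by
  have hc : 1 < padicNorm p c := normc_big h hx
  have hb := per_bound (p := p) h
  rw [max_eq_right (le_of_lt hc)] at hb
  rcases lt_or_eq_of_le hb with hlt | he
  · exfalso
    have hlt2 : padicNorm p (x ^ 2) < padicNorm p c := by rw [norm_sq]; exact hlt
    have hne : padicNorm p (x ^ 2) ≠ padicNorm p (-c) := by
      rw [padicNorm.neg]; exact ne_of_lt hlt2
    have heq : padicNorm p (x ^ 2 - c) = padicNorm p c := by
      rw [sub_eq_add_neg, padicNorm.add_eq_max_of_ne hne, padicNorm.neg]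
      exact max_eq_right (le_of_lt hlt2)
    have hper : Per c (x ^ 2 - c) := by simpa using per_iterate h 1
    have hb2 := per_bound (p := p) hper
    rw [heq, max_eq_right (le_of_lt hc)] at hb2
    nlinarith
  · exact he

private lemma per_small {x y : ℚ} (hx : Per c x) (hy : Per c y)
    (hsx : padicNorm p x ≤ 1) : padicNorm p y ≤ 1 := by
  by_contra hlt
  push_neg at hlt
  exact absurd (normx_big hx (normc_big hy hlt)) (not_lt.2 hsx)
end

section
variable {p : ℕ} [hp : Fact p.Prime]

private lemma norm_den_eq {x : ℚ} :
    padicNorm p (x.den : ℚ) = (p : ℚ) ^ (-(padicValNat p x.den : ℤ)) := by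
  have hd : (x.den : ℚ) ≠ 0 := by exact_mod_cast x.den_nz
  rw [padicNorm.eq_zpow_of_nonzero hd, padicValRat.of_nat]

private lemma not_dvd_num_of_dvd_den {x : ℚ} (h : p ∣ x.den) : ¬ (p : ℤ) ∣ x.num := by
  intro hn
  have hn' : p ∣ x.num.natAbs := Int.natCast_dvd.mp hn
  have := Nat.eq_one_of_dvd_one (x.reduced ▸ Nat.dvd_gcd hn' h)
  exact hp.out.one_lt.ne' this

private lemma norm_of_not_dvd_den {x : ℚ} (h : ¬ p ∣ x.den) : padicNorm p x ≤ 1 := by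
  have hx : padicNorm p x = padicNorm p (x.num : ℚ) / padicNorm p (x.den : ℚ) := by
    rw [← padicNorm.div, Rat.num_div_den]
  rw [hx, (padicNorm.nat_eq_one_iff _).2 h, div_one]
  exact padicNorm.of_int x.num

private lemma norm_of_dvd_den {x : ℚ} (h : p ∣ x.den) :
    padicNorm p x = (p : ℚ) ^ (padicValNat p x.den) ∧ 1 < padicNorm p x := by
  have hx : padicNorm p x = padicNorm p (x.num : ℚ) / padicNorm p (x.den : ℚ) := by
    rw [← padicNorm.div, Rat.num_div_den]
  have hnum : padicNorm p (x.num : ℚ) = 1 :=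
    (padicNorm.int_eq_one_iff _).2 (not_dvd_num_of_dvd_den h)
  have hp1 : (1:ℚ) < (p:ℚ) := by exact_mod_cast hp.out.one_lt
  have hv : 1 ≤ padicValNat p x.den := one_le_padicValNat_of_dvd x.den_nz h
  have he : padicNorm p x = (p : ℚ) ^ (padicValNat p x.den) := by
    rw [hx, hnum, norm_den_eq, zpow_neg, one_div, inv_inv, zpow_natCast]
  refine ⟨he, ?_⟩
  rw [he]
  exact one_lt_pow₀ hp1 (by omega)
end


section
variable {p : ℕ} [hp : Fact p.Prime] {c : ℚ}

private lemma norm_lt_of_dvd_num {x : ℚ} (hn : (p : ℤ) ∣ x.num) (hd : ¬ p ∣ x.den) :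
    padicNorm p x < 1 := by
  have hx : padicNorm p x = padicNorm p (x.num : ℚ) / padicNorm p (x.den : ℚ) := by
    rw [← padicNorm.div, Rat.num_div_den]
  rw [hx, (padicNorm.nat_eq_one_iff _).2 hd, div_one]
  exact (padicNorm.int_lt_one_iff _).2 hn
end

private lemma den_eq_s6 {c x y : ℚ} (hx : Per c x) (hy : Per c y) : x.den = y.den := by
  rw [Nat.eq_iff_prime_padicValNat_eq _ _ x.den_nz y.den_nz]
  intro q hq
  haveI := Fact.mk hq
  by_cases hdx : q ∣ x.den <;> by_cases hdy : q ∣ y.den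
  · obtain ⟨hex, hbx⟩ := norm_of_dvd_den (p := q) hdx
    obtain ⟨hey, hby⟩ := norm_of_dvd_den (p := q) hdy
    have h1 : padicNorm q x ^ 2 = padicNorm q c := norm_eq_c hx hbx
    have h2 : padicNorm q y ^ 2 = padicNorm q c := norm_eq_c hy hby
    have hnxy : padicNorm q x = padicNorm q y := by
      have h3 : (padicNorm q x - padicNorm q y) * (padicNorm q x + padicNorm q y) = 0 := by
        linear_combination h1 - h2
      rcases mul_eq_zero.1 h3 with h4 | h4
      · linarith
      · linarith
    rw [hex, hey] at hnxy
    exact pow_right_injective₀ (by exact_mod_cast hq.pos) (by exact_mod_cast hq.one_lt.ne') hnxy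
  · exact absurd (per_small hy hx (norm_of_not_dvd_den hdy))
      (not_le.2 (norm_of_dvd_den (p := q) hdx).2)
  · exact absurd (per_small hx hy (norm_of_not_dvd_den hdx))
      (not_le.2 (norm_of_dvd_den (p := q) hdy).2)
  · rw [padicValNat.eq_zero_of_not_dvd hdx, padicValNat.eq_zero_of_not_dvd hdy]

private lemma tele {p : ℕ} [hp : Fact p.Prime] {c x y : ℚ} (hx : Per c x) (hy : Per c y)
    (hsx : padicNorm p x ≤ 1) (hsum : padicNorm p (x + y) < 1) : x = y := by
  by_contra hne
  obtain ⟨n, hn, hfx, hfy⟩ := per_common hx hy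
  have smallx : ∀ k : ℕ, padicNorm p ((fun t : ℚ => t ^ 2 - c)^[k] x) ≤ 1 :=
    fun k => per_small hx (per_iterate hx k) hsx
  have smally : ∀ k : ℕ, padicNorm p ((fun t : ℚ => t ^ 2 - c)^[k] y) ≤ 1 :=
    fun k => per_small hx (per_iterate hy k) hsx
  have hprod : ∀ k : ℕ, (fun t : ℚ => t ^ 2 - c)^[k + 1] x - (fun t : ℚ => t ^ 2 - c)^[k + 1] y
      = ((fun t : ℚ => t ^ 2 - c)^[k] x - (fun t : ℚ => t ^ 2 - c)^[k] y)
        * ((fun t : ℚ => t ^ 2 - c)^[k] x + (fun t : ℚ => t ^ 2 - c)^[k] y) := by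
    intro k
    rw [Function.iterate_succ_apply', Function.iterate_succ_apply']
    ring
  have hD0 : 0 < padicNorm p (x - y) :=
    lt_of_le_of_ne (padicNorm.nonneg _) (Ne.symm (padicNorm.nonzero (sub_ne_zero.2 hne)))
  have claim : ∀ k : ℕ, padicNorm p ((fun t : ℚ => t ^ 2 - c)^[k + 1] x
      - (fun t : ℚ => t ^ 2 - c)^[k + 1] y) < padicNorm p (x - y) := by
    intro k; induction k with
    | zero =>
      rw [hprod 0]
      simp only [Function.iterate_zero_apply]
      rw [padicNorm.mul]
      exact mul_lt_of_lt_one_right hD0 hsum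
    | succ k ih =>
      rw [hprod (k + 1), padicNorm.mul]
      calc padicNorm p ((fun t : ℚ => t ^ 2 - c)^[k + 1] x - (fun t : ℚ => t ^ 2 - c)^[k + 1] y)
            * padicNorm p ((fun t : ℚ => t ^ 2 - c)^[k + 1] x + (fun t : ℚ => t ^ 2 - c)^[k + 1] y)
          ≤ padicNorm p ((fun t : ℚ => t ^ 2 - c)^[k + 1] x
              - (fun t : ℚ => t ^ 2 - c)^[k + 1] y) * 1 := by
            refine mul_le_mul_of_nonneg_left ?_ (padicNorm.nonneg _)
            exact le_trans padicNorm.nonarchimedean (max_le (smallx _) (smally _))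
        _ < padicNorm p (x - y) := by rw [mul_one]; exact ih
  obtain ⟨m, rfl⟩ : ∃ m, n = m + 1 := ⟨n - 1, by omega⟩
  have := claim m
  rw [hfx, hfy] at this
  exact lt_irrefl _ this

/-- If `x ≠ y` are rational periodic points of `φ_c(t) = t² - c`, with
`X = num x`, `Y = num y` and `d = den x`, then every prime dividing `X + Y`
divides `d`, and `X` and `Y` are coprime. -/
theorem stmt_6 (c : ℚ) (x y : ℚ) (hxy : x ≠ y)
    (hx : ∃ n : ℕ, 1 ≤ n ∧ (fun t : ℚ => t ^ 2 - c)^[n] x = x)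
    (hy : ∃ n : ℕ, 1 ≤ n ∧ (fun t : ℚ => t ^ 2 - c)^[n] y = y) :
    (∀ p : ℕ, p.Prime → (p : ℤ) ∣ x.num + y.num → (p : ℤ) ∣ (x.den : ℤ)) ∧
      IsCoprime x.num y.num := by
  have hxP : Per c x := hx
  have hyP : Per c y := hy
  constructor
  · intro p pp hdvd
    haveI := Fact.mk pp
    by_contra hnd
    have hnd' : ¬ p ∣ x.den := fun h => hnd (Int.natCast_dvd_natCast.2 h)
    have hde : y.den = x.den := (den_eq_s6 hyP hxP)
    have hsx : padicNorm p x ≤ 1 := norm_of_not_dvd_den hnd'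
    have hxysum : x + y = ((x.num + y.num : ℤ) : ℚ) / (x.den : ℚ) := by
      conv_lhs => rw [← Rat.num_div_den x, ← Rat.num_div_den y, hde]
      push_cast
      rw [← add_div]
    have hsum : padicNorm p (x + y) < 1 := by
      rw [hxysum, padicNorm.div, (padicNorm.nat_eq_one_iff _).2 hnd', div_one]
      exact (padicNorm.int_lt_one_iff _).2 hdvd
    exact hxy (tele hxP hyP hsx hsum)
  · rw [Int.isCoprime_iff_gcd_eq_one]
    by_contra hg
    rcases Nat.eq_zero_or_pos (Int.gcd x.num y.num) with h0 | hpos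
    · obtain ⟨hx0, hy0⟩ := Int.gcd_eq_zero_iff.1 h0
      exact hxy (by rw [← Rat.num_div_den x, ← Rat.num_div_den y, hx0, hy0]; simp)
    · obtain ⟨q, hq, hqg⟩ := Nat.exists_prime_and_dvd hg
      haveI := Fact.mk hq
      have hqx : (q : ℤ) ∣ x.num :=
        dvd_trans (Int.natCast_dvd_natCast.2 hqg) (Int.gcd_dvd_left _ _)
      have hqy : (q : ℤ) ∣ y.num :=
        dvd_trans (Int.natCast_dvd_natCast.2 hqg) (Int.gcd_dvd_right _ _)
      have hdx : ¬ q ∣ x.den := fun h => not_dvd_num_of_dvd_den h hqx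
      have hdy : ¬ q ∣ y.den := fun h => not_dvd_num_of_dvd_den h hqy
      have hnx : padicNorm q x < 1 := norm_lt_of_dvd_num hqx hdx
      have hny : padicNorm q y < 1 := norm_lt_of_dvd_num hqy hdy
      have hsum : padicNorm q (x + y) < 1 :=
        lt_of_le_of_lt padicNorm.nonarchimedean (max_lt hnx hny)
      exact hxy (tele hxP hyP (le_of_lt hnx) hsum)
end

section
/- Let c ∈ ℚ. If den(c) is odd, then φ_c has at most 2 rational periodic points, i.e. |Per(φ_c)| ≤ 2. -/
/- Auxiliary lemmas about the 2-adic norm. -/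

private lemma my_norm_two : ‖(2 : ℚ_[2])‖ = 1/2 := by
  have := Padic.norm_p (p := 2)
  push_cast at this ⊢
  rw [this]; norm_num

private lemma my_norm_even (N : ℤ) (hN : Even N) : ‖(N : ℚ_[2])‖ ≤ 1/2 := by
  obtain ⟨M, rfl⟩ := hN
  have : ((M + M : ℤ) : ℚ_[2]) = 2 * (M : ℚ_[2]) := by push_cast; ring
  rw [this, norm_mul, my_norm_two]
  have := Padic.norm_int_le_one (p := 2) M
  nlinarith [norm_nonneg ((M : ℚ_[2]))]

private lemma my_norm_odd (N : ℤ) (hN : Odd N) : ‖(N : ℚ_[2])‖ = 1 := by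
  have h1 := Padic.norm_int_le_one (p := 2) N
  have h2 : ¬ ‖(N : ℚ_[2])‖ < 1 := by
    rw [Padic.norm_intCast_lt_one_iff]
    rw [Int.odd_iff] at hN; omega
  rcases lt_or_eq_of_le h1 with h | h
  · exact absurd h h2
  · exact h

private lemma my_norm_rat_le_one (q : ℚ) (h : Odd q.den) : ‖(q : ℚ_[2])‖ ≤ 1 :=
  Padic.norm_rat_le_one (by rw [Nat.odd_iff] at h; omega)

private lemma my_cast_eq (q : ℚ) :
    (q : ℚ_[2]) = (q.num : ℚ_[2]) / ((q.den : ℤ) : ℚ_[2]) := by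
  rw [Rat.cast_def]; push_cast; ring

private lemma my_num_odd (q : ℚ) (h : Even q.den) : Odd q.num := by
  rw [Int.odd_iff]
  rw [Nat.even_iff] at h
  rcases Int.emod_two_eq q.num with h2 | h2
  · exfalso
    have h3 : (2:ℕ) ∣ q.num.natAbs := by omega
    have hd : (2:ℕ) ∣ q.den := by omega
    have := Nat.Coprime.eq_one_of_dvd (Nat.Coprime.coprime_dvd_left h3 q.reduced) hd
    omega
  · exact h2

private lemma my_norm_rat_gt_one (q : ℚ) (h : Even q.den) : 1 < ‖(q : ℚ_[2])‖ := by
  have hnum : ‖(q.num : ℚ_[2])‖ = 1 := my_norm_odd _ (my_num_odd q h)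
  have hden : ‖((q.den : ℤ) : ℚ_[2])‖ ≤ 1/2 := by
    apply my_norm_even
    rw [Int.even_iff]; rw [Nat.even_iff] at h; omega
  have hden0 : ‖((q.den : ℤ) : ℚ_[2])‖ ≠ 0 := by
    simp only [ne_eq, norm_eq_zero]
    exact_mod_cast q.den_nz
  have hdenpos : 0 < ‖((q.den : ℤ) : ℚ_[2])‖ :=
    lt_of_le_of_ne (norm_nonneg _) (Ne.symm hden0)
  rw [my_cast_eq, norm_div, hnum]
  rw [lt_div_iff₀ hdenpos]
  linarith

/- The map on ℚ_[2] and its basic properties. -/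

/-- The closed unit ball is invariant. -/
private lemma my_ball_inv (C : ℚ_[2]) (hC : ‖C‖ ≤ 1) (t : ℚ_[2]) (ht : ‖t‖ ≤ 1) :
    ‖t ^ 2 - C‖ ≤ 1 := by
  have := Padic.nonarchimedean (t ^ 2) (-C)
  have h2 : ‖t ^ 2‖ ≤ 1 := by
    rw [pow_two, norm_mul]; nlinarith [norm_nonneg t]
  calc ‖t ^ 2 - C‖ = ‖t ^ 2 + (-C)‖ := by ring_nf
    _ ≤ max ‖t ^ 2‖ ‖-C‖ := Padic.nonarchimedean _ _
    _ ≤ 1 := by rw [norm_neg]; exact max_le h2 hC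

/-- Outside the ball, norms get squared. -/
private lemma my_escape (C : ℚ_[2]) (hC : ‖C‖ ≤ 1) (t : ℚ_[2]) (ht : 1 < ‖t‖) :
    ‖t ^ 2 - C‖ = ‖t‖ ^ 2 := by
  have h2 : ‖t ^ 2‖ = ‖t‖ ^ 2 := by rw [pow_two, pow_two, norm_mul]
  have hne : ‖t ^ 2‖ ≠ ‖-C‖ := by
    rw [h2, norm_neg]; nlinarith
  have := Padic.add_eq_max_of_ne (p := 2) hne
  have heq : t ^ 2 - C = t ^ 2 + (-C) := by ring
  rw [heq, this, h2, norm_neg]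
  rw [max_eq_left]
  nlinarith

/-- Periodic points lie in the unit ball. -/
private lemma my_per_in_ball (C : ℚ_[2]) (hC : ‖C‖ ≤ 1) (a : ℚ_[2]) (n : ℕ)
    (hn : 1 ≤ n) (ha : (fun t : ℚ_[2] => t ^ 2 - C)^[n] a = a) : ‖a‖ ≤ 1 := by
  by_contra hgt
  push_neg at hgt
  set g : ℚ_[2] → ℚ_[2] := fun t => t ^ 2 - C with hg
  have key : ∀ k : ℕ, ‖g^[k] a‖ = ‖a‖ ^ (2 ^ k) := by
    intro k
    induction k with
    | zero => simp
    | succ k ih =>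
      have hbig : 1 < ‖g^[k] a‖ := by
        rw [ih]
        calc 1 < ‖a‖ := hgt
          _ ≤ ‖a‖ ^ 2 ^ k := le_self_pow₀ (le_of_lt hgt) (by positivity)
      rw [Function.iterate_succ_apply']
      show ‖(g^[k] a) ^ 2 - C‖ = _
      rw [my_escape C hC _ hbig, ih, ← pow_mul, pow_succ]
  have := key n
  rw [ha] at this
  have h2n : 2 ≤ 2 ^ n := by
    calc 2 = 2 ^ 1 := (pow_one 2).symm
      _ ≤ 2 ^ n := Nat.pow_le_pow_right (by norm_num) hn
  have hlt : ‖a‖ < ‖a‖ ^ (2 ^ n) := by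
    calc ‖a‖ = ‖a‖ ^ 1 := (pow_one _).symm
      _ < ‖a‖ ^ (2 ^ n) := by
        apply pow_lt_pow_right₀ hgt
        omega
  linarith [this, hlt]

/-- Contraction: two periodic points at distance ≤ 1/2 are equal. -/
private lemma my_contract (C : ℚ_[2]) (hC : ‖C‖ ≤ 1) (a b : ℚ_[2])
    (ha1 : ‖a‖ ≤ 1) (hb1 : ‖b‖ ≤ 1) (n : ℕ) (hn : 1 ≤ n)
    (ha : (fun t : ℚ_[2] => t ^ 2 - C)^[n] a = a)
    (hb : (fun t : ℚ_[2] => t ^ 2 - C)^[n] b = b)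
    (hd : ‖a - b‖ ≤ 1/2) : a = b := by
  set g : ℚ_[2] → ℚ_[2] := fun t => t ^ 2 - C with hg
  have key : ∀ k : ℕ, ‖g^[k] a - g^[k] b‖ ≤ (1/2) ^ k * ‖a - b‖ ∧
      ‖g^[k] a‖ ≤ 1 ∧ ‖g^[k] b‖ ≤ 1 := by
    intro k
    induction k with
    | zero => refine ⟨by simp, by simpa using ha1, by simpa using hb1⟩
    | succ k ih =>
      obtain ⟨ihd, ihA, ihB⟩ := ih
      set u := g^[k] a
      set v := g^[k] b
      have hduv : ‖u - v‖ ≤ 1/2 := by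
        calc ‖u - v‖ ≤ (1/2) ^ k * ‖a - b‖ := ihd
          _ ≤ 1 * (1/2) := by
            apply mul_le_mul _ hd (norm_nonneg _) (by norm_num)
            apply pow_le_one₀ <;> norm_num
          _ = 1/2 := by norm_num
      have hsum : ‖u + v‖ ≤ 1/2 := by
        have h2v : ‖(2 : ℚ_[2]) * v‖ ≤ 1/2 := by
          rw [norm_mul, my_norm_two]
          nlinarith [norm_nonneg v]
        have heq : u + v = (u - v) + 2 * v := by ring
        rw [heq]
        calc ‖(u - v) + 2 * v‖ ≤ max ‖u - v‖ ‖2 * v‖ := Padic.nonarchimedean _ _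
          _ ≤ 1/2 := max_le hduv h2v
      refine ⟨?_, ?_, ?_⟩
      · rw [Function.iterate_succ_apply', Function.iterate_succ_apply']
        show ‖(u ^ 2 - C) - (v ^ 2 - C)‖ ≤ _
        have heq : (u ^ 2 - C) - (v ^ 2 - C) = (u + v) * (u - v) := by ring
        rw [heq, norm_mul]
        calc ‖u + v‖ * ‖u - v‖ ≤ (1/2) * ((1/2) ^ k * ‖a - b‖) := by
              apply mul_le_mul hsum ihd (norm_nonneg _) (by norm_num)
          _ = (1/2) ^ (k+1) * ‖a - b‖ := by ring
      · rw [Function.iterate_succ_apply']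
        exact my_ball_inv C hC u ihA
      · rw [Function.iterate_succ_apply']
        exact my_ball_inv C hC v ihB
  by_contra hne
  have hpos : 0 < ‖a - b‖ := by
    rw [norm_pos_iff]
    exact sub_ne_zero_of_ne hne
  have := (key n).1
  rw [ha, hb] at this
  have hlt : (1/2 : ℝ) ^ n < 1 := by
    apply pow_lt_one₀ <;> [norm_num; norm_num; omega]
  nlinarith

/-- If `x` is periodic with period `n`, it is fixed by any multiple of `n` iterations. -/
private lemma my_iterate_mul {α : Type*} (f : α → α) (x : α) (n m : ℕ)
    (hx : f^[n] x = x) : f^[n * m] x = x := by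
  induction m with
  | zero => simp
  | succ m ih =>
    rw [Nat.mul_succ, Function.iterate_add_apply, hx, ih]

/-- Two rationals with numerators of equal parity and odd denominators are 2-adically close. -/
private lemma my_close (x y : ℚ) (hx : Odd x.den) (hy : Odd y.den)
    (hpar : (Even x.num ↔ Even y.num)) : ‖(x : ℚ_[2]) - (y : ℚ_[2])‖ ≤ 1/2 := by
  have hxd0 : ((x.den : ℤ) : ℚ_[2]) ≠ 0 := by
    simp only [ne_eq, Int.cast_eq_zero, Nat.cast_eq_zero]
    exact x.den_nz
  have hyd0 : ((y.den : ℤ) : ℚ_[2]) ≠ 0 := by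
    simp only [ne_eq, Int.cast_eq_zero, Nat.cast_eq_zero]
    exact y.den_nz
  have heq : (x : ℚ_[2]) - (y : ℚ_[2]) =
      ((x.num * y.den - y.num * x.den : ℤ) : ℚ_[2]) / ((x.den * y.den : ℤ) : ℚ_[2]) := by
    rw [my_cast_eq x, my_cast_eq y]
    push_cast
    field_simp
  have hxd : ¬ Even ((x.den : ℤ)) := by
    rw [Int.even_coe_nat]; exact Nat.not_even_iff_odd.mpr hx
  have hyd : ¬ Even ((y.den : ℤ)) := by
    rw [Int.even_coe_nat]; exact Nat.not_even_iff_odd.mpr hy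
  have hNum : Even (x.num * (y.den : ℤ) - y.num * (x.den : ℤ)) := by
    rw [Int.even_sub, Int.even_mul, Int.even_mul]
    tauto
  have hDen : ‖((x.den * y.den : ℤ) : ℚ_[2])‖ = 1 := by
    apply my_norm_odd
    exact hx.natCast.mul hy.natCast
  rw [heq, norm_div, hDen, div_one]
  exact my_norm_even _ hNum

/-- If `den c` is odd, then `φ_c(t) = t² - c` has at most 2 rational periodic
points. -/
theorem stmt_7 (c : ℚ) (h : Odd c.den) :
    {x : ℚ | ∃ n : ℕ, 1 ≤ n ∧ (fun t : ℚ => t ^ 2 - c)^[n] x = x}.Finite ∧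
      {x : ℚ | ∃ n : ℕ, 1 ≤ n ∧ (fun t : ℚ => t ^ 2 - c)^[n] x = x}.ncard ≤ 2 := by
  set f : ℚ → ℚ := fun t => t ^ 2 - c with hf
  set g : ℚ_[2] → ℚ_[2] := fun t => t ^ 2 - (c : ℚ_[2]) with hg
  set S : Set ℚ := {x : ℚ | ∃ n : ℕ, 1 ≤ n ∧ f^[n] x = x} with hS
  have hC : ‖(c : ℚ_[2])‖ ≤ 1 := my_norm_rat_le_one c h
  -- cast commutes with iteration
  have hcomm : ∀ (k : ℕ) (x : ℚ), ((f^[k] x : ℚ) : ℚ_[2]) = g^[k] (x : ℚ_[2]) := by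
    intro k
    induction k with
    | zero => intro x; simp
    | succ k ih =>
      intro x
      rw [Function.iterate_succ_apply', Function.iterate_succ_apply', ← ih x]
      show ((f^[k] x) ^ 2 - c : ℚ) = ((f^[k] x : ℚ) : ℚ_[2]) ^ 2 - (c : ℚ_[2])
      push_cast
      ring
  -- periodic points have 2-adic norm ≤ 1
  have hball : ∀ x ∈ S, ‖(x : ℚ_[2])‖ ≤ 1 := by
    rintro x ⟨n, hn, hnx⟩
    apply my_per_in_ball (c : ℚ_[2]) hC _ n hn
    rw [← hcomm n x, hnx]
  -- periodic points have odd denominator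
  have hoddden : ∀ x ∈ S, Odd x.den := by
    intro x hx
    rcases Nat.even_or_odd x.den with he | ho
    · exfalso
      have := my_norm_rat_gt_one x he
      linarith [hball x hx]
    · exact ho
  -- two periodic points that are 2-adically close are equal
  have hkey : ∀ x ∈ S, ∀ y ∈ S, (Even x.num ↔ Even y.num) → x = y := by
    rintro x ⟨n, hn, hnx⟩ y ⟨m, hm, hmy⟩ hpar
    have hxS : x ∈ S := ⟨n, hn, hnx⟩
    have hyS : y ∈ S := ⟨m, hm, hmy⟩
    have hclose : ‖(x : ℚ_[2]) - (y : ℚ_[2])‖ ≤ 1/2 :=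
      my_close x y (hoddden x hxS) (hoddden y hyS) hpar
    have hN : 1 ≤ n * m := Nat.one_le_iff_ne_zero.mpr (by positivity)
    have hax : g^[n * m] (x : ℚ_[2]) = (x : ℚ_[2]) := by
      rw [← hcomm (n * m) x, my_iterate_mul f x n m hnx]
    have hby : g^[n * m] (y : ℚ_[2]) = (y : ℚ_[2]) := by
      rw [Nat.mul_comm, ← hcomm (m * n) y, my_iterate_mul f y m n hmy]
    have := my_contract (c : ℚ_[2]) hC (x : ℚ_[2]) (y : ℚ_[2])
      (hball x hxS) (hball y hyS) (n * m) hN hax hby hclose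
    exact_mod_cast this
  -- among any three periodic points, two coincide
  have h3 : ∀ x ∈ S, ∀ y ∈ S, ∀ z ∈ S, x = y ∨ x = z ∨ y = z := by
    intro x hx y hy z hz
    by_cases hxy : Even x.num ↔ Even y.num
    · exact Or.inl (hkey x hx y hy hxy)
    by_cases hxz : Even x.num ↔ Even z.num
    · exact Or.inr (Or.inl (hkey x hx z hz hxz))
    have hyz : Even y.num ↔ Even z.num := by tauto
    exact Or.inr (Or.inr (hkey y hy z hz hyz))
  -- assemble
  by_cases hemp : S = ∅
  · rw [hemp]
    exact ⟨Set.finite_empty, by simp⟩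
  obtain ⟨a, ha⟩ := Set.nonempty_iff_ne_empty.mpr hemp
  by_cases hsub : ∃ b ∈ S, b ≠ a
  · obtain ⟨b, hb, hba⟩ := hsub
    have hsub2 : S ⊆ {a, b} := by
      intro z hz
      rcases h3 a ha b hb z hz with h1 | h1 | h1
      · exact absurd h1.symm hba
      · exact Or.inl h1.symm
      · exact Or.inr h1.symm
    have hfin : S.Finite := Set.Finite.subset (((Set.finite_singleton b).insert a)) hsub2
    refine ⟨hfin, ?_⟩
    calc S.ncard ≤ ({a, b} : Set ℚ).ncard :=
          Set.ncard_le_ncard hsub2 (((Set.finite_singleton b).insert a))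
      _ ≤ ({b} : Set ℚ).ncard + 1 := Set.ncard_insert_le a {b}
      _ ≤ 2 := by rw [Set.ncard_singleton]
  · push_neg at hsub
    have hsub2 : S ⊆ {a} := fun z hz => hsub z hz
    have hfin : S.Finite := Set.Finite.subset (Set.finite_singleton a) hsub2
    refine ⟨hfin, ?_⟩
    calc S.ncard ≤ ({a} : Set ℚ).ncard :=
          Set.ncard_le_ncard hsub2 (Set.finite_singleton a)
      _ ≤ 2 := by rw [Set.ncard_singleton]; omega
end

section
/- Let c ∈ ℚ. If φ_c admits a rational periodic point of period n ≥ 3, then den(c) is divisible by 16. -/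
open Function IsUltrametricDist

instance : Fact (Nat.Prime 2) := ⟨Nat.prime_two⟩

namespace Stmt8Aux

local notation "K" => ℚ_[2]

lemma norm2 : ‖(2 : K)‖ = 2⁻¹ := by
  have := @Padic.norm_p 2 _
  norm_num at this ⊢
  exact_mod_cast this

lemma disc (x : K) (n : ℤ) : ‖x‖ ≤ 2 ^ n ↔ ‖x‖ < 2 ^ (n + 1) := by
  have := Padic.norm_le_pow_iff_norm_lt_pow_add_one x n
  norm_num at this
  exact this

lemma tri (a b : K) : ‖a + b‖ ≤ max ‖a‖ ‖b‖ := Padic.nonarchimedean a b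

lemma tri3 (a b c : K) : ‖a + b + c‖ ≤ max ‖a‖ (max ‖b‖ ‖c‖) := by
  have h1 := tri (a+b) c
  have h2 := tri a b
  calc ‖a + b + c‖ ≤ max (max ‖a‖ ‖b‖) ‖c‖ := le_trans h1 (max_le_max h2 le_rfl)
    _ = max ‖a‖ (max ‖b‖ ‖c‖) := max_assoc _ _ _


/-- Any element of `ℚ_[2]` of norm 1 is congruent to 1 mod 2. -/
lemma unit_near_one {w : K} (h : ‖w‖ = 1) : ‖w - 1‖ ≤ 2⁻¹ := by
  set z : ℤ_[2] := ⟨w, le_of_eq h⟩ with hz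
  have hz1 : PadicInt.toZMod z ≠ 0 := by
    intro h0
    have : z ∈ IsLocalRing.maximalIdeal ℤ_[2] := by
      rw [← PadicInt.ker_toZMod]; exact h0
    rw [PadicInt.maximalIdeal_eq_span_p, Ideal.mem_span_singleton] at this
    have := (PadicInt.norm_lt_one_iff_dvd z).2 this
    rw [PadicInt.norm_def] at this
    simp only [hz] at this
    rw [h] at this
    exact lt_irrefl _ this
  have hz2 : PadicInt.toZMod z = 1 := by
    revert hz1; generalize PadicInt.toZMod z = a; revert a; decide
  have hker : PadicInt.toZMod (z - 1) = 0 := by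
    rw [map_sub, hz2, map_one, sub_self]
  have hmem : z - 1 ∈ IsLocalRing.maximalIdeal ℤ_[2] := by
    rw [← PadicInt.ker_toZMod]; exact hker
  rw [PadicInt.maximalIdeal_eq_span_p] at hmem
  have hspan : z - 1 ∈ Ideal.span {(2 : ℤ_[2]) ^ 1} := by simpa using hmem
  have := (PadicInt.norm_le_pow_iff_mem_span_pow (z - 1) 1).2 hspan
  have hcoe : ((z - 1 : ℤ_[2]) : K) = w - 1 := by
    push_cast [hz]
    rfl
  rw [PadicInt.norm_def, hcoe] at this
  calc ‖w - 1‖ ≤ (2:ℝ) ^ (-(1:ℤ)) := by exact_mod_cast this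
    _ = 2⁻¹ := by norm_num

/-- char 2: equal norms force the sum to be smaller. -/
lemma char2 {a b : K} (h : ‖a‖ = ‖b‖) : ‖a + b‖ ≤ ‖a‖ * 2⁻¹ := by
  rcases eq_or_ne b 0 with rfl | hb
  · simp only [norm_zero] at h
    simp [h]
  have hb' : ‖b‖ ≠ 0 := by simpa using hb
  have hdiv : ‖a / b‖ = 1 := by rw [norm_div, h, div_self hb']
  have h2 : ‖a / b + 1‖ ≤ 2⁻¹ := by
    have hneg : ‖-(a / b)‖ = 1 := by simpa using hdiv
    have := unit_near_one hneg
    calc ‖a / b + 1‖ = ‖-(a / b) - 1‖ := by rw [← norm_neg]; ring_nf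
      _ ≤ 2⁻¹ := this
  have key : a + b = b * (a / b + 1) := by field_simp
  rw [key, norm_mul]
  calc ‖b‖ * ‖a / b + 1‖ ≤ ‖b‖ * 2⁻¹ := by
        exact mul_le_mul_of_nonneg_left h2 (norm_nonneg _)
    _ = ‖a‖ * 2⁻¹ := by rw [h]

lemma norm_eq_of_sub_lt {x y : K} (h : ‖x - y‖ < ‖x‖) : ‖y‖ = ‖x‖ := by
  have h1 : ‖y‖ ≤ ‖x‖ := by
    have hy : y = x + -(x - y) := by ring
    rw [hy]
    refine le_trans (tri x (-(x-y))) ?_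
    rw [norm_neg]
    exact max_le le_rfl h.le
  rcases lt_or_eq_of_le h1 with h2 | h2
  · exfalso
    have hx : x = y + (x - y) := by ring
    have h3 : ‖x‖ ≤ max ‖y‖ ‖x - y‖ := by
      conv_lhs => rw [hx]
      exact tri _ _
    rcases max_cases ‖y‖ ‖x-y‖ with ⟨he,_⟩|⟨he,_⟩ <;> rw [he] at h3
    · exact absurd (lt_of_le_of_lt h3 h2) (lt_irrefl _)
    · exact absurd (lt_of_le_of_lt h3 h) (lt_irrefl _)
  · exact h2

lemma sq_sub_one {w : K} (h : ‖w‖ = 1) : ‖w ^ 2 - 1‖ ≤ 8⁻¹ := by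
  have hfac : w ^ 2 - 1 = (w - 1) * (w + 1) := by ring
  have h1 : ‖w - 1‖ ≤ 2⁻¹ := unit_near_one h
  have h2 : ‖w + 1‖ ≤ 2⁻¹ := by
    have : w + 1 = (w - 1) + 2 := by ring
    rw [this]
    refine le_trans (tri _ _) (max_le h1 (le_of_eq norm2))
  rcases le_or_gt ‖w - 1‖ 4⁻¹ with h3 | h3
  · rw [hfac, norm_mul]
    calc ‖w - 1‖ * ‖w + 1‖ ≤ 4⁻¹ * 2⁻¹ := by
          exact mul_le_mul h3 h2 (norm_nonneg _) (by norm_num)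
      _ = 8⁻¹ := by norm_num
  · -- ‖w-1‖ = 2⁻¹ exactly, then ‖w+1‖ ≤ 4⁻¹ by char2
    have he : ‖w - 1‖ = 2⁻¹ := le_antisymm h1 (by
      by_contra hcon
      push_neg at hcon
      have hp1 : (2:ℝ) ^ ((-2:ℤ) + 1) = 2⁻¹ := by norm_num
      have hp2 : (2:ℝ) ^ (-2:ℤ) = 4⁻¹ := by norm_num
      have hlt : ‖w - 1‖ < (2:ℝ) ^ ((-2:ℤ) + 1) := by rw [hp1]; exact hcon
      have := (disc (w-1) (-2)).2 hlt
      rw [hp2] at this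
      linarith)
    have h4 : ‖w + 1‖ ≤ 4⁻¹ := by
      have : w + 1 = (w - 1) + 2 := by ring
      rw [this]
      have := char2 (a := w - 1) (b := (2:K)) (by rw [he, norm2])
      rw [he] at this
      calc ‖(w-1) + 2‖ ≤ 2⁻¹ * 2⁻¹ := this
        _ = 4⁻¹ := by norm_num
    rw [hfac, norm_mul, he]
    calc 2⁻¹ * ‖w + 1‖ ≤ 2⁻¹ * 4⁻¹ := by
          exact mul_le_mul_of_nonneg_left h4 (by norm_num)
      _ = 8⁻¹ := by norm_num

lemma pow_sub_one {w : K} (h : ‖w‖ ≤ 1) (k : ℕ) : ‖w ^ k - 1‖ ≤ ‖w - 1‖ := by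
  induction k with
  | zero => simp
  | succ k ih =>
      have : w ^ (k+1) - 1 = w ^ k * (w - 1) + (w ^ k - 1) := by ring
      rw [this]
      refine le_trans (tri _ _) (max_le ?_ ih)
      rw [norm_mul]
      calc ‖w ^ k‖ * ‖w - 1‖ ≤ 1 * ‖w - 1‖ := by
            refine mul_le_mul_of_nonneg_right ?_ (norm_nonneg _)
            calc ‖w ^ k‖ = ‖w‖ ^ k := norm_pow _ _
              _ ≤ 1 := pow_le_one₀ (norm_nonneg _) h
        _ = ‖w - 1‖ := one_mul _

lemma sum_bound {s : Finset ℕ} {f : ℕ → K} {e : ℝ} (he : 0 ≤ e)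
    (h : ∀ i ∈ s, ‖f i‖ ≤ e) : ‖∑ i ∈ s, f i‖ ≤ e := by
  rcases s.eq_empty_or_nonempty with rfl | hs
  · simpa using he
  obtain ⟨i, hi, hle⟩ := exists_norm_finset_sum_le_of_nonempty hs f
  exact hle.trans (h i hi)


lemma add_le {a b : K} {e : ℝ} (ha : ‖a‖ ≤ e) (hb : ‖b‖ ≤ e) : ‖a + b‖ ≤ e :=
  (tri a b).trans (max_le ha hb)

lemma sub_le {a b : K} {e : ℝ} (ha : ‖a‖ ≤ e) (hb : ‖b‖ ≤ e) : ‖a - b‖ ≤ e := by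
  rw [sub_eq_add_neg]
  exact add_le ha (by rwa [norm_neg])

lemma norm_step (x : K) (n : ℤ) (h : ‖x‖ ≤ 2 ^ (n+1)) : ‖x‖ ≤ 2 ^ n ∨ ‖x‖ = 2 ^ (n+1) := by
  rcases le_or_gt ‖x‖ (2 ^ n) with h1 | h1
  · exact Or.inl h1
  · refine Or.inr (le_antisymm h ?_)
    by_contra hcon
    push_neg at hcon
    exact absurd ((disc x n).2 hcon) (not_le.2 h1)

lemma nat_norm_le_one (k : ℕ) : ‖((k : ℕ) : K)‖ ≤ 1 := by
  have := Padic.norm_int_le_one (p := 2) (k : ℤ)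
  push_cast at this
  exact this

set_option maxHeartbeats 2000000 in
theorem no_cycle (c x : ℚ) (n : ℕ) (hn : 3 ≤ n)
    (h : Function.minimalPeriod (fun t : ℚ => t ^ 2 - c) x = n)
    (hc : ‖((c : ℚ) : K)‖ ≤ 8) : False := by
  set f : ℚ → ℚ := fun t => t ^ 2 - c with hf
  set γ : K := ((c : ℚ) : K) with hγ
  set y : ℕ → K := fun i => ((f^[i] x : ℚ) : K) with hy_def
  have hy : ∀ i, y (i+1) = y i ^ 2 - γ := by
    intro i
    simp only [hy_def, Function.iterate_succ_apply']
    rw [hf]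
    push_cast
    ring
  have hyn : ∀ i, y (i + n) = y i := by
    intro i
    have hpn : f^[n] x = x := by rw [← h]; exact Function.iterate_minimalPeriod
    simp only [hy_def, Function.iterate_add_apply, hpn]
  have hinj : ∀ i j, i < j → j < n → y i ≠ y j := by
    intro i j hij hjn hcon
    have : f^[i] x = f^[j] x := by
      have := hcon
      simp only [hy_def] at this
      exact_mod_cast this
    have := Function.iterate_injOn_Iio_minimalPeriod (f := f) (x := x)
      (by rw [h]; exact Set.mem_Iio.2 (hij.trans hjn)) (by rw [h]; exact Set.mem_Iio.2 hjn) this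
    omega
  have hwrapk : ∀ k i, y (i + k * n) = y i := by
    intro k
    induction k with
    | zero => intro i; simp
    | succ k ih =>
        intro i
        have : i + (k+1) * n = (i + k * n) + n := by ring
        rw [this, hyn, ih]
  have hwrap : ∀ i, ∃ j, j < n ∧ y i = y j := by
    intro i
    refine ⟨i % n, Nat.mod_lt _ (by omega), ?_⟩
    conv_lhs => rw [show i = i % n + (i / n) * n by rw [Nat.mul_comm]; exact (Nat.mod_add_div i n).symm]
    exact hwrapk (i / n) (i % n)
  -- a maximal-norm point
  obtain ⟨i₀, hi₀mem, hi₀max⟩ := Finset.exists_max_image (Finset.range n) (fun i => ‖y i‖)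
    ⟨0, Finset.mem_range.2 (by omega)⟩
  have hmax : ∀ i, ‖y i‖ ≤ ‖y i₀‖ := by
    intro i
    obtain ⟨j, hj, hji⟩ := hwrap i
    rw [hji]
    exact hi₀max j (Finset.mem_range.2 hj)
  have hle2 : ∀ i, ‖y i‖ ≤ 2 := by
    have h2 : ‖y i₀‖ ≤ 2 := by
      by_contra hcon
      push_neg at hcon
      have h4 : (4:ℝ) ≤ ‖y i₀‖ := by
        have := (disc (y i₀) 1)
        have h1 : ¬ ‖y i₀‖ ≤ 2 ^ (1:ℤ) := by norm_num; exact hcon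
        have h2 : ¬ ‖y i₀‖ < 2 ^ ((1:ℤ)+1) := fun hcc => h1 (this.2 hcc)
        push_neg at h2
        calc (4:ℝ) = 2 ^ ((1:ℤ)+1) := by norm_num
          _ ≤ ‖y i₀‖ := h2
      have hsq : ‖y i₀ ^ 2‖ = ‖y i₀‖^2 := by rw [norm_pow]
      have hbig : ‖γ‖ < ‖y i₀ ^ 2‖ := by
        rw [hsq]
        have : (16:ℝ) ≤ ‖y i₀‖^2 := by nlinarith
        linarith [hc]
      have hnext : ‖y (i₀+1)‖ = ‖y i₀‖^2 := by
        rw [hy i₀]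
        rw [← hsq]
        apply norm_eq_of_sub_lt
        simpa using hbig
      have := hmax (i₀+1)
      rw [hnext] at this
      nlinarith
    intro i; exact (hmax i).trans h2
  -- case on ‖γ‖
  have hcase : ‖γ‖ ≤ 1 ∨ ‖γ‖ = 2 ∨ ‖γ‖ = 4 ∨ ‖γ‖ = 8 := by
    have c3 : ‖γ‖ ≤ 2 ^ ((2:ℤ)+1) := by norm_num; exact hc
    rcases norm_step γ 2 c3 with h1 | h1
    · rcases norm_step γ 1 (by norm_num; norm_num at h1; exact h1) with h2 | h2
      · rcases norm_step γ 0 (by norm_num; norm_num at h2; exact h2) with h3 | h3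
        · left; norm_num at h3; exact h3
        · right; left; norm_num at h3; exact h3
      · right; right; left; norm_num at h2; exact h2
    · right; right; right; norm_num at h1; exact h1
  -- helper: if the norm of y i ^2 differs from γ, next norm is the max
  have hnext : ∀ i, ‖γ‖ ≠ ‖y i ^ 2‖ → ‖y (i+1)‖ = max ‖y i ^2‖ ‖γ‖ := by
    intro i hne
    rw [hy i, sub_eq_add_neg, Padic.add_eq_max_of_ne (by rwa [norm_neg, ne_comm]), norm_neg]
  rcases hcase with hγ1 | hγ2 | hγ4 | hγ8
  · -- Case ‖γ‖ ≤ 1 : contraction for f²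
    have hle1 : ∀ i, ‖y i‖ ≤ 1 := by
      have h1 : ‖y i₀‖ ≤ 1 := by
        by_contra hcon
        push_neg at hcon
        have heq2 : ‖y i₀‖ = 2 := by
          rcases norm_step (y i₀) 0 (by norm_num; exact hle2 i₀) with h1 | h1
          · norm_num at h1; linarith
          · norm_num at h1; exact h1
        have h4 : ‖y (i₀+1)‖ = 4 := by
          rw [hnext i₀ (by rw [norm_pow, heq2]; norm_num; linarith), norm_pow, heq2]
          rw [max_eq_left (by norm_num; linarith)]
          norm_num
        have := hle2 (i₀+1)
        rw [h4] at this
        norm_num at this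
      intro i; exact (hmax i).trans h1
    have hodd : ∀ z : K, ‖z‖ ≤ 1 → ‖z^2 - z‖ ≤ 2⁻¹ := by
      intro z hz
      have hfac : z^2 - z = z * (z - 1) := by ring
      rcases norm_step z (-1) (by norm_num; exact hz) with h1 | h1
      · rw [hfac, norm_mul]
        calc ‖z‖ * ‖z-1‖ ≤ 2⁻¹ * 1 := by
              refine mul_le_mul (by norm_num at h1 ⊢; exact h1) ?_ (norm_nonneg _) (by norm_num)
              exact sub_le hz (by norm_num)
          _ ≤ 2⁻¹ := by norm_num
      · rw [hfac, norm_mul]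
        have h2 : ‖z - 1‖ ≤ 2⁻¹ := unit_near_one (by norm_num at h1; exact h1)
        calc ‖z‖ * ‖z-1‖ ≤ 1 * 2⁻¹ := mul_le_mul hz h2 (norm_nonneg _) (by norm_num)
          _ ≤ 2⁻¹ := by norm_num
    have hsum2 : ∀ i, ‖y (i+2) + y i‖ ≤ 2⁻¹ := by
      intro i
      have key : y (i+2) + y i =
          (y (i+1)^2 - y (i+1)) + (y i^2 - y i) + (2*y i - 2*γ) := by
        have e1 : y (i+1) = y i ^ 2 - γ := hy i
        have e2 : y (i+2) = y (i+1) ^ 2 - γ := hy (i+1)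
        linear_combination e2 + e1
      rw [key]
      refine add_le (add_le (hodd _ (hle1 (i+1))) (hodd _ (hle1 i))) ?_
      have h2y : ‖(2:K)*y i‖ ≤ 2⁻¹ := by
        rw [norm_mul, norm2]
        calc 2⁻¹ * ‖y i‖ ≤ 2⁻¹ * 1 := mul_le_mul_of_nonneg_left (hle1 i) (by norm_num)
          _ = 2⁻¹ := by norm_num
      have h2γ : ‖(2:K)*γ‖ ≤ 2⁻¹ := by
        rw [norm_mul, norm2]
        calc 2⁻¹ * ‖γ‖ ≤ 2⁻¹ * 1 := mul_le_mul_of_nonneg_left hγ1 (by norm_num)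
          _ = 2⁻¹ := by norm_num
      exact sub_le h2y h2γ
    have hcontr : ∀ i, ‖y (i+4) - y (i+2)‖ ≤ 4⁻¹ * ‖y (i+2) - y i‖ := by
      intro i
      have key : y (i+4) - y (i+2) = (y (i+2) - y i) * (y (i+2) + y i) * (y (i+3) + y (i+1)) := by
        have e1 : y (i+1) = y i ^ 2 - γ := hy i
        have e2 : y (i+2) = y (i+1) ^ 2 - γ := hy (i+1)
        have e3 : y (i+3) = y (i+2) ^ 2 - γ := hy (i+2)
        have e4 : y (i+4) = y (i+3) ^ 2 - γ := hy (i+3)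
        linear_combination e4 - e2 + (y (i+3) + y (i+1)) * (e3 - e1)
      rw [key, norm_mul, norm_mul]
      calc ‖y (i+2) - y i‖ * ‖y (i+2) + y i‖ * ‖y (i+3) + y (i+1)‖
          ≤ ‖y (i+2) - y i‖ * 2⁻¹ * 2⁻¹ := by
            refine mul_le_mul (mul_le_mul_of_nonneg_left (hsum2 i) (norm_nonneg _))
              ?_ (norm_nonneg _) ?_
            · exact hsum2 (i+1)
            · positivity
        _ = 4⁻¹ * ‖y (i+2) - y i‖ := by ring
    have hiter : ∀ k, ‖y (2*k+2) - y (2*k)‖ ≤ (4⁻¹)^k * ‖y 2 - y 0‖ := by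
      intro k
      induction k with
      | zero => simp
      | succ k ih =>
          have hidx1 : 2*(k+1)+2 = (2*k)+4 := by ring
          have hidx2 : 2*(k+1) = (2*k)+2 := by ring
          rw [hidx1, hidx2]
          calc ‖y (2*k+4) - y (2*k+2)‖ ≤ 4⁻¹ * ‖y (2*k+2) - y (2*k)‖ := hcontr (2*k)
            _ ≤ 4⁻¹ * ((4⁻¹)^k * ‖y 2 - y 0‖) := by
                exact mul_le_mul_of_nonneg_left ih (by norm_num)
            _ = (4⁻¹)^(k+1) * ‖y 2 - y 0‖ := by ring
    have hzero : y 2 = y 0 := by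
      have h1 := hiter n
      have h2 : y (2*n) = y 0 := by
        have := hwrapk 2 0
        rw [Nat.zero_add] at this
        rw [show 2*n = n*2 by ring] at this ⊢
        exact this
      have h3 : y (2*n+2) = y 2 := by
        have := hwrapk 2 2
        rw [show 2*n+2 = 2 + n*2 by ring]
        rw [show 2 + 2*n = 2 + n*2 by ring] at this
        exact this
      rw [h2, h3] at h1
      have h4 : (4⁻¹:ℝ)^n ≤ 4⁻¹ := by
        calc (4⁻¹:ℝ)^n ≤ (4⁻¹)^1 := by
              refine pow_le_pow_of_le_one (by norm_num) (by norm_num) (by omega)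
          _ = 4⁻¹ := by norm_num
      have h5 : ‖y 2 - y 0‖ ≤ 4⁻¹ * ‖y 2 - y 0‖ := by
        refine h1.trans ?_
        exact mul_le_mul_of_nonneg_right h4 (norm_nonneg _)
      have h6 : ‖y 2 - y 0‖ = 0 := by nlinarith [norm_nonneg (y 2 - y 0)]
      have := norm_eq_zero.1 h6
      exact sub_eq_zero.1 this
    exact hinj 0 2 (by omega) (by omega) hzero.symm
  · -- Case ‖γ‖ = 2
    have hy0 : ‖y 0‖ ≤ 1 ∨ ‖y 0‖ = 2 := by
      rcases norm_step (y 0) 0 (by norm_num; exact hle2 0) with h1 | h1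
      · left; norm_num at h1; exact h1
      · right; norm_num at h1; exact h1
    rcases hy0 with h1 | h1
    · have h2 : ‖y 1‖ = 2 := by
        have := hnext 0 (by rw [norm_pow, hγ2]; nlinarith [norm_nonneg (y 0), h1])
        rw [hγ2] at this
        rw [show (0:ℕ)+1 = 1 from rfl] at this
        rw [this, max_eq_right (by rw [norm_pow]; nlinarith [norm_nonneg (y 0), h1])]
      have h3 : ‖y 2‖ = 4 := by
        have := hnext 1 (by rw [norm_pow, hγ2, h2]; norm_num)
        rw [show (1:ℕ)+1 = 2 from rfl] at this
        rw [this, norm_pow, h2, hγ2, max_eq_left (by norm_num)]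
        norm_num
      have := hle2 2
      rw [h3] at this
      norm_num at this
    · have h2 : ‖y 1‖ = 4 := by
        have := hnext 0 (by rw [norm_pow, hγ2, h1]; norm_num)
        rw [show (0:ℕ)+1 = 1 from rfl] at this
        rw [this, norm_pow, h1, hγ2, max_eq_left (by norm_num)]
        norm_num
      have := hle2 1
      rw [h2] at this
      norm_num at this
  · -- Case ‖γ‖ = 4 : the main case
    have hU : ∀ i, ‖y i‖ = 2 := by
      intro i
      rcases norm_step (y i) 0 (by norm_num; exact hle2 i) with h1 | h1
      · exfalso
        norm_num at h1
        have h2 : ‖y (i+1)‖ = 4 := by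
          have := hnext i (by rw [norm_pow, hγ4]; nlinarith [norm_nonneg (y i)])
          rw [this, hγ4, max_eq_right (by rw [norm_pow]; nlinarith [norm_nonneg (y i)])]
        have := hle2 (i+1)
        rw [h2] at this
        norm_num at this
      · norm_num at h1; exact h1
    set u : ℕ → K := fun i => 2 * y i with hu_def
    set d : K := 4 * γ with hd_def
    set r : K := (1 - d) / 2 with hr_def
    have hu : ∀ i, 2 * u (i+1) = u i ^ 2 - d := by
      intro i
      simp only [hu_def, hd_def]
      linear_combination 4 * (hy i)
    have hu1 : ∀ i, ‖u i‖ = 1 := by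
      intro i
      simp only [hu_def]
      rw [norm_mul, norm2, hU i]
      norm_num
    have hperu : ∀ i, u (i + n) = u i := by
      intro i
      simp only [hu_def, hyn i]
    have hdist : ∀ i j, i < j → j < n → u i ≠ u j := by
      intro i j hij hjn hcon
      refine hinj i j hij hjn ?_
      simp only [hu_def] at hcon
      have h2 : (2:K) ≠ 0 := two_ne_zero
      exact mul_left_cancel₀ h2 hcon
    have hur : ∀ i, ‖u i - r‖ ≤ 4⁻¹ := by
      have key : ∀ i, ‖u (i+1) - r‖ ≤ 4⁻¹ := by
        intro i
        have hid : u (i+1) - r = (u i ^ 2 - 1) / 2 := by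
          rw [hr_def]
          field_simp
          linear_combination 4 * (hy i)
        rw [hid, norm_div, norm2, div_eq_mul_inv, inv_inv]
        have := sq_sub_one (hu1 i)
        calc ‖u i ^ 2 - 1‖ * 2 ≤ 8⁻¹ * 2 := by
              exact mul_le_mul_of_nonneg_right this (by norm_num)
          _ = 4⁻¹ := by norm_num
      intro i
      cases i with
      | zero =>
          have hn0 : u 0 = u ((n-1)+1) := by
            have := hperu 0
            rw [Nat.zero_add] at this
            rw [show (n-1)+1 = n by omega]
            exact this.symm
          rw [hn0]
          exact key (n-1)
      | succ i => exact key i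
    have hr1 : ‖r‖ = 1 := by
      have := norm_eq_of_sub_lt (x := u 0) (y := r)
        (by rw [hu1 0]; exact lt_of_le_of_lt (hur 0) (by norm_num))
      rw [this, hu1 0]
    have hsum : ∀ i j, ‖u i + u j‖ = 2⁻¹ := by
      intro i j
      have h2r : ‖(2:K) * r‖ = 2⁻¹ := by rw [norm_mul, norm2, hr1, mul_one]
      have hdiff : ‖2*r - (u i + u j)‖ < ‖(2:K)*r‖ := by
        have hid : 2*r - (u i + u j) = -((u i - r) + (u j - r)) := by ring
        rw [hid, norm_neg, h2r]
        exact lt_of_le_of_lt (add_le (hur i) (hur j)) (by norm_num)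
      have := norm_eq_of_sub_lt hdiff
      rw [this, h2r]
    have hiso : ∀ i j, ‖u (i+1) - u (j+1)‖ = ‖u i - u j‖ := by
      intro i j
      have hid : u (i+1) - u (j+1) = (u i - u j) * ((u i + u j) / 2) := by
        field_simp
        linear_combination (hu i) - (hu j)
      rw [hid, norm_mul, norm_div, norm2, hsum i j]
      norm_num
    set t : ℕ → ℝ := fun k => ‖u k - u 0‖ with ht_def
    have htrans : ∀ k i, ‖u (i+k) - u i‖ = t k := by
      intro k i
      induction i with
      | zero => rw [Nat.zero_add]
      | succ i ih =>
          have hidx : i+1+k = (i+k)+1 := by omega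
          rw [hidx, hiso (i+k) i, ih]
    have htpos : ∀ k, 0 < k → k < n → 0 < t k := by
      intro k h0 hkn
      simp only [ht_def]
      rw [norm_pos_iff]
      exact sub_ne_zero.2 (Ne.symm (hdist 0 k h0 hkn))
    have htsym : ∀ k, 0 < k → k < n → t (n - k) = t k := by
      intro k h0 hkn
      have h1 := htrans (n - k) k
      rw [show k + (n - k) = n by omega] at h1
      have h2 : u n = u 0 := by
        have := hperu 0
        rwa [Nat.zero_add] at this
      rw [h2] at h1
      rw [← h1]
      simp only [ht_def]
      rw [norm_sub_rev]
    have htchar : ∀ k k', k' < k → k < n → 0 < k' → t k = t k' → t (k - k') ≤ t k * 2⁻¹ := by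
      intro k k' hk'k hkn hk'0 heq
      have h1 : ‖(u k - u 0) + (-(u k' - u 0))‖ ≤ ‖u k - u 0‖ * 2⁻¹ := by
        apply char2
        rw [norm_neg]
        exact heq
      have h2 : (u k - u 0) + (-(u k' - u 0)) = u k - u k' := by ring
      rw [h2] at h1
      have h3 := htrans (k - k') k'
      rw [show k' + (k - k') = k by omega] at h3
      rw [← h3]
      exact h1
    -- first minimum gives n = 2*m
    obtain ⟨m, hmmem, hmmin⟩ := Finset.exists_min_image (Finset.Ico 1 n) t
      ⟨1, Finset.mem_Ico.2 ⟨le_refl 1, by omega⟩⟩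
    obtain ⟨hm1, hmn⟩ := Finset.mem_Ico.1 hmmem
    have htmpos : 0 < t m := htpos m (by omega) hmn
    have huniq : ∀ k, k ∈ Finset.Ico 1 n → t k = t m → k = m := by
      intro k hk heq
      obtain ⟨hk1, hkn⟩ := Finset.mem_Ico.1 hk
      by_contra hne
      rcases lt_or_gt_of_ne hne with hlt | hgt
      · have hch := htchar m k hlt hmn (by omega) heq.symm
        have hmem2 : m - k ∈ Finset.Ico 1 n := Finset.mem_Ico.2 ⟨by omega, by omega⟩
        have hge := hmmin (m-k) hmem2
        linarith
      · have hch := htchar k m hgt hkn (by omega) heq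
        have hmem2 : k - m ∈ Finset.Ico 1 n := Finset.mem_Ico.2 ⟨by omega, by omega⟩
        have hge := hmmin (k-m) hmem2
        rw [heq] at hch
        linarith
    have hn2m : n = 2 * m := by
      have hmem2 : n - m ∈ Finset.Ico 1 n := Finset.mem_Ico.2 ⟨by omega, by omega⟩
      have := huniq (n-m) hmem2 (htsym m (by omega) hmn)
      omega
    -- second minimum gives 4 ∣ n
    obtain ⟨k₁, hk₁mem, hk₁min⟩ := Finset.exists_min_image ((Finset.Ico 1 n).erase m) t
      ⟨1, Finset.mem_erase.2 ⟨by omega, Finset.mem_Ico.2 ⟨le_refl 1, by omega⟩⟩⟩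
    obtain ⟨hk₁ne, hk₁Ico⟩ := Finset.mem_erase.1 hk₁mem
    obtain ⟨hk₁1, hk₁n⟩ := Finset.mem_Ico.1 hk₁Ico
    have hk₁pos := htpos k₁ (by omega) hk₁n
    have hgtm : t m < t k₁ := by
      rcases lt_or_eq_of_le (hmmin k₁ hk₁Ico) with h1 | h1
      · exact h1
      · exact absurd (huniq k₁ hk₁Ico h1.symm) hk₁ne
    have hpair : ∀ k k', k ∈ (Finset.Ico 1 n).erase m → k' ∈ (Finset.Ico 1 n).erase m →
        t k = t k₁ → t k' = t k₁ → k' < k → k = k' + m := by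
      intro k k' hk hk' he he' hlt
      obtain ⟨hkne, hkIco⟩ := Finset.mem_erase.1 hk
      obtain ⟨hk'ne, hk'Ico⟩ := Finset.mem_erase.1 hk'
      obtain ⟨hka, hkb⟩ := Finset.mem_Ico.1 hkIco
      obtain ⟨hk'a, hk'b⟩ := Finset.mem_Ico.1 hk'Ico
      have hch := htchar k k' hlt hkb (by omega) (by rw [he, he'])
      rw [he] at hch
      have hmem3 : k - k' ∈ Finset.Ico 1 n := Finset.mem_Ico.2 ⟨by omega, by omega⟩
      by_contra hne2
      have hne3 : k - k' ≠ m := by omega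
      have hmem4 : k - k' ∈ (Finset.Ico 1 n).erase m := Finset.mem_erase.2 ⟨hne3, hmem3⟩
      have := hk₁min (k-k') hmem4
      linarith
    have hk₁m_ne : k₁ + m ≠ n := by omega
    set k₂ := if k₁ + m < n then k₁ + m else k₁ + m - n with hk₂def
    have hu_k₂ : u (k₁ + m) = u k₂ := by
      by_cases hcase2 : k₁ + m < n
      · rw [hk₂def]
        simp only [if_pos hcase2]
      · rw [hk₂def]
        simp only [if_neg hcase2]
        have h5 := hperu (k₁ + m - n)
        rw [show (k₁ + m - n) + n = k₁ + m by omega] at h5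
        exact h5
    have ht_k₂ : t k₂ = t k₁ := by
      have h1 : ‖u (k₁ + m) - u k₁‖ = t m := htrans m k₁
      have h2 : ‖u k₁ - u 0‖ = t k₁ := rfl
      have h4 : ‖u (k₁+m) - u 0‖ = max (t m) (t k₁) := by
        rw [show u (k₁+m) - u 0 = (u (k₁+m) - u k₁) + (u k₁ - u 0) by ring]
        rw [Padic.add_eq_max_of_ne (by rw [h1, h2]; exact ne_of_lt hgtm), h1, h2]
      rw [hu_k₂] at h4
      show t k₂ = t k₁
      simp only [ht_def]
      rw [h4, max_eq_right (le_of_lt hgtm)]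
    have hk₂mem : k₂ ∈ (Finset.Ico 1 n).erase m := by
      refine Finset.mem_erase.2 ⟨?_, Finset.mem_Ico.2 ⟨?_, ?_⟩⟩
      · rw [hk₂def]; split_ifs with hh <;> omega
      · rw [hk₂def]; split_ifs with hh <;> omega
      · rw [hk₂def]; split_ifs with hh <;> omega
    have hk₂ne : k₂ ≠ k₁ := by rw [hk₂def]; split_ifs with hh <;> omega
    have hnk₁mem : n - k₁ ∈ (Finset.Ico 1 n).erase m :=
      Finset.mem_erase.2 ⟨by omega, Finset.mem_Ico.2 ⟨by omega, by omega⟩⟩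
    have htnk₁ : t (n - k₁) = t k₁ := htsym k₁ (by omega) hk₁n
    have hmeven : 2 ∣ m := by
      by_cases hcase3 : n - k₁ = k₁
      · omega
      · by_cases hcase4 : n - k₁ = k₂
        · rw [hk₂def] at hcase4
          split_ifs at hcase4 with hh <;> omega
        · exfalso
          have d1 : k₂ = k₁ + m ∨ k₁ = k₂ + m := by
            rcases lt_or_gt_of_ne hk₂ne with hl | hg
            · right
              exact hpair k₁ k₂ hk₁mem hk₂mem rfl ht_k₂ hl
            · left
              exact hpair k₂ k₁ hk₂mem hk₁mem ht_k₂ rfl hg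
          have d2 : n - k₁ = k₁ + m ∨ k₁ = (n - k₁) + m := by
            rcases lt_or_gt_of_ne hcase3 with hl | hg
            · right
              exact hpair k₁ (n-k₁) hk₁mem hnk₁mem rfl htnk₁ hl
            · left
              exact hpair (n-k₁) k₁ hnk₁mem hk₁mem htnk₁ rfl hg
          have d3 : n - k₁ = k₂ + m ∨ k₂ = (n - k₁) + m := by
            rcases lt_or_gt_of_ne hcase4 with hl | hg
            · right
              exact hpair k₂ (n-k₁) hk₂mem hnk₁mem ht_k₂ htnk₁ hl
            · left
              exact hpair (n-k₁) k₂ hnk₁mem hk₂mem htnk₁ ht_k₂ hg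
          omega
    obtain ⟨m', hm'⟩ := hmeven
    -- algebraic finale
    set a : ℕ → K := fun i => (u i - r) / 4 with ha_def
    set e : K := (r^2 - 1) / 8 with he_def
    set b : ℕ → K := fun k => a k + a (k + m) with hb_def
    have n4 : ‖(4:K)‖ = 4⁻¹ := by
      rw [show (4:K) = 2*2 by norm_num, norm_mul, norm2]
      norm_num
    have n8 : ‖(8:K)‖ = 8⁻¹ := by
      rw [show (8:K) = 2*2*2 by norm_num, norm_mul, norm_mul, norm2]
      norm_num
    have ha1 : ∀ i, ‖a i‖ ≤ 1 := by
      intro i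
      simp only [ha_def]
      rw [norm_div, n4, div_eq_mul_inv, inv_inv]
      calc ‖u i - r‖ * 4 ≤ 4⁻¹ * 4 := mul_le_mul_of_nonneg_right (hur i) (by norm_num)
        _ = 1 := by norm_num
    have hb1 : ∀ k, ‖b k‖ ≤ 1 := by
      intro k
      simp only [hb_def]
      exact add_le (ha1 k) (ha1 (k+m))
    have he1 : ‖e‖ ≤ 1 := by
      simp only [he_def]
      rw [norm_div, n8, div_eq_mul_inv, inv_inv]
      calc ‖r^2 - 1‖ * 8 ≤ 8⁻¹ * 8 := mul_le_mul_of_nonneg_right (sq_sub_one hr1) (by norm_num)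
        _ = 1 := by norm_num
    have hrm1 : ‖r - 1‖ ≤ 2⁻¹ := unit_near_one hr1
    have hrd : 2 * r = 1 - d := by
      rw [hr_def]
      ring
    have hstep : ∀ i, ‖a (i+1) - a i - e‖ ≤ 2⁻¹ := by
      intro i
      have hid : a (i+1) - a i - e = (r - 1) * a i + 2 * (a i)^2 := by
        simp only [ha_def, he_def]
        field_simp
        linear_combination (2 : K) * (hu i) - (2:K) * ((u i) - r + 2*r - 2) * hrd + (56:K) * (hy i)
      rw [hid]
      refine add_le ?_ ?_
      · rw [norm_mul]
        calc ‖r-1‖ * ‖a i‖ ≤ 2⁻¹ * 1 :=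
              mul_le_mul hrm1 (ha1 i) (norm_nonneg _) (by norm_num)
          _ = 2⁻¹ := by norm_num
      · rw [norm_mul, norm2, norm_pow]
        calc 2⁻¹ * ‖a i‖^2 ≤ 2⁻¹ * 1 := by
              refine mul_le_mul_of_nonneg_left ?_ (by norm_num)
              exact pow_le_one₀ (norm_nonneg _) (ha1 i)
          _ = 2⁻¹ := by norm_num
    have hlin : ∀ i, ‖a i - a 0 - (i:K)*e‖ ≤ 2⁻¹ := by
      intro i
      induction i with
      | zero => simp
      | succ i ih =>
          have hid : a (i+1) - a 0 - ((i+1 : ℕ):K)*e =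
              (a (i+1) - a i - e) + (a i - a 0 - (i:K)*e) := by
            push_cast
            ring
          rw [hid]
          exact add_le (hstep i) ih
    set S : K := ∑ i ∈ Finset.range n, a i with hS_def
    have hcastsum : (∑ i ∈ Finset.range n, (i:K)) = ((n*(n-1)/2 : ℕ) : K) := by
      rw [← Nat.cast_sum]
      congr 1
      exact Finset.sum_range_id n
    have hsplit : S = (∑ i ∈ Finset.range n, (a i - a 0 - (i:K)*e))
        + ((n:ℕ):K)*a 0 + ((n*(n-1)/2 : ℕ):K)*e := by
      rw [Finset.sum_sub_distrib, Finset.sum_sub_distrib, ← Finset.sum_mul, hcastsum,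
        Finset.sum_const, Finset.card_range, nsmul_eq_mul]
      ring
    have hnorm_n : ‖((n:ℕ):K)‖ ≤ 4⁻¹ := by
      have hn4 : n = 4*m' := by omega
      rw [hn4]
      push_cast
      rw [norm_mul]
      calc ‖(4:K)‖ * ‖((m':ℕ):K)‖ ≤ 4⁻¹ * 1 := by
            rw [n4]
            exact mul_le_mul_of_nonneg_left (nat_norm_le_one m') (by norm_num)
        _ = 4⁻¹ := by norm_num
    have hnorm_half : ‖((n*(n-1)/2 : ℕ):K)‖ ≤ 2⁻¹ := by
      have hprod : n*(n-1) = 4*(m'*(n-1)) := by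
        have : n = 4*m' := by omega
        rw [this]
        ring
      have heq2 : n*(n-1)/2 = 2*(m'*(n-1)) := by omega
      rw [heq2]
      push_cast
      rw [norm_mul, norm2]
      calc 2⁻¹ * ‖(((m':ℕ):K) * ((n-1:ℕ):K))‖ ≤ 2⁻¹ * 1 := by
            refine mul_le_mul_of_nonneg_left ?_ (by norm_num)
            rw [norm_mul]
            calc ‖((m':ℕ):K)‖ * ‖((n-1:ℕ):K)‖ ≤ 1*1 :=
                  mul_le_mul (nat_norm_le_one m') (nat_norm_le_one (n-1)) (norm_nonneg _) zero_le_one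
              _ = 1 := by norm_num
        _ = 2⁻¹ := by norm_num
    have hS1 : ‖S‖ ≤ 2⁻¹ := by
      rw [hsplit]
      refine add_le (add_le ?_ ?_) ?_
      · exact sum_bound (by norm_num) (fun i _ => hlin i)
      · rw [norm_mul]
        calc ‖((n:ℕ):K)‖ * ‖a 0‖ ≤ 4⁻¹ * 1 :=
              mul_le_mul hnorm_n (ha1 0) (norm_nonneg _) (by norm_num)
          _ ≤ 2⁻¹ := by norm_num
      · rw [norm_mul]
        calc ‖((n*(n-1)/2 : ℕ):K)‖ * ‖e‖ ≤ 2⁻¹ * 1 :=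
              mul_le_mul hnorm_half he1 (norm_nonneg _) (by norm_num)
          _ = 2⁻¹ := by norm_num
    set F : ℕ → K := fun k => r + 2 * b k with hF_def
    set P : ℕ → K := fun j => ∏ k ∈ Finset.range j, F k with hP_def
    set B : ℕ → K := fun j => ∑ k ∈ Finset.range j, b k with hB_def
    have hF1 : ∀ k, ‖F k‖ ≤ 1 := by
      intro k
      simp only [hF_def]
      refine add_le (le_of_eq hr1) ?_
      rw [norm_mul, norm2]
      calc 2⁻¹ * ‖b k‖ ≤ 2⁻¹ * 1 := mul_le_mul_of_nonneg_left (hb1 k) (by norm_num)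
        _ ≤ 1 := by norm_num
    have hB1 : ∀ j, ‖B j‖ ≤ 1 := by
      intro j
      simp only [hB_def]
      exact sum_bound (by norm_num) (fun i _ => hb1 i)
    have hrpow : ∀ j, ‖r^j - 1‖ ≤ 2⁻¹ := fun j => (pow_sub_one (le_of_eq hr1) j).trans hrm1
    have hexp : ∀ j, ‖P j - r^j - 2*(B j)‖ ≤ 4⁻¹ := by
      intro j
      induction j with
      | zero =>
          simp only [hP_def, hB_def]
          simp
      | succ j ih =>
          have hid : P (j+1) - r^(j+1) - 2*(B (j+1)) =
              (P j - r^j - 2*(B j)) * (F j) + 2*(b j)*(r^j - 1) + 2*(B j)*(r - 1)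
                + 4*(B j)*(b j) := by
            simp only [hP_def, hB_def, hF_def]
            rw [Finset.prod_range_succ, Finset.sum_range_succ]
            ring
          rw [hid]
          refine add_le (add_le (add_le ?_ ?_) ?_) ?_
          · rw [norm_mul]
            calc ‖P j - r^j - 2*(B j)‖ * ‖F j‖ ≤ 4⁻¹ * 1 :=
                  mul_le_mul ih (hF1 j) (norm_nonneg _) (by norm_num)
              _ = 4⁻¹ := by norm_num
          · rw [norm_mul, norm_mul, norm2]
            calc 2⁻¹ * ‖b j‖ * ‖r^j - 1‖ ≤ 2⁻¹ * 1 * 2⁻¹ := by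
                  refine mul_le_mul (mul_le_mul_of_nonneg_left (hb1 j) (by norm_num))
                    (hrpow j) (norm_nonneg _) (by norm_num)
              _ = 4⁻¹ := by norm_num
          · rw [norm_mul, norm_mul, norm2]
            calc 2⁻¹ * ‖B j‖ * ‖r - 1‖ ≤ 2⁻¹ * 1 * 2⁻¹ := by
                  refine mul_le_mul (mul_le_mul_of_nonneg_left (hB1 j) (by norm_num))
                    hrm1 (norm_nonneg _) (by norm_num)
              _ = 4⁻¹ := by norm_num
          · rw [norm_mul, norm_mul, n4]
            calc 4⁻¹ * ‖B j‖ * ‖b j‖ ≤ 4⁻¹ * 1 * 1 := by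
                  refine mul_le_mul (mul_le_mul_of_nonneg_left (hB1 j) (by norm_num))
                    (hb1 j) (norm_nonneg _) (by norm_num)
              _ = 4⁻¹ := by norm_num
    have hFalt : ∀ k, F k = (u k + u (k+m))/2 := by
      intro k
      simp only [hF_def, hb_def, ha_def]
      field_simp
      linear_combination (2:K) * hrd
    have hD : ∀ j, u j - u (j + m) = (u 0 - u m) * P j := by
      intro j
      induction j with
      | zero =>
          simp only [hP_def, Finset.prod_range_zero, mul_one]
          rw [Nat.zero_add]
      | succ j ih =>
          have hidx : (j+1) + m = (j+m) + 1 := by omega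
          rw [hidx]
          have hstep2 : u (j+1) - u ((j+m)+1) = (u j - u (j+m)) * F j := by
            have hid : u (j+1) - u ((j+m)+1) = (u j - u (j+m)) * ((u j + u (j+m))/2) := by
              field_simp
              linear_combination (hu j) - (hu (j+m))
            rw [hid, ← hFalt j]
          rw [hstep2, ih]
          simp only [hP_def]
          rw [Finset.prod_range_succ]
          ring
    have hPm : P m = -1 := by
      have h1 := hD m
      rw [show m + m = n by omega] at h1
      have h2 : u n = u 0 := by
        have := hperu 0
        rwa [Nat.zero_add] at this
      rw [h2] at h1
      have h3 : u 0 - u m ≠ 0 := sub_ne_zero.2 (hdist 0 m (by omega) hmn)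
      have h4 : (u 0 - u m) * (P m + 1) = 0 := by linear_combination (-1:K) * h1
      rcases mul_eq_zero.1 h4 with h5 | h5
      · exact absurd h5 h3
      · exact eq_neg_of_add_eq_zero_left h5
    have hBmS : B m = S := by
      simp only [hB_def, hb_def, hS_def]
      rw [Finset.sum_add_distrib]
      rw [show n = m + m by omega, Finset.sum_range_add]
      congr 1
      exact Finset.sum_congr rfl (fun k _ => by rw [Nat.add_comm])
    have hfinal := hexp m
    rw [hPm, hBmS] at hfinal
    have h2S : ‖(2:K)*S‖ ≤ 4⁻¹ := by
      rw [norm_mul, norm2]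
      calc 2⁻¹ * ‖S‖ ≤ 2⁻¹ * 2⁻¹ := mul_le_mul_of_nonneg_left hS1 (by norm_num)
        _ = 4⁻¹ := by norm_num
    have h6 : ‖(-1:K) - r^m‖ ≤ 4⁻¹ := by
      rw [show (-1:K) - r^m = ((-1:K) - r^m - 2*S) + 2*S by ring]
      exact add_le hfinal h2S
    have h7 : ‖r^m - 1‖ ≤ 8⁻¹ := by
      rw [hm', pow_mul]
      refine (pow_sub_one ?_ m').trans (sq_sub_one hr1)
      rw [norm_pow, hr1]
      norm_num
    have h8 : ‖(-2:K)‖ ≤ 4⁻¹ := by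
      rw [show (-2:K) = ((-1:K) - r^m) + (r^m - 1) by ring]
      exact add_le h6 (h7.trans (by norm_num))
    rw [show (-2:K) = -(2:K) by norm_num, norm_neg, norm2] at h8
    norm_num at h8
  · -- Case ‖γ‖ = 8
    have h1 : ‖y 1‖ = 8 := by
      have := hnext 0 (by rw [norm_pow, hγ8]; nlinarith [hle2 0, norm_nonneg (y 0)])
      rw [show (0:ℕ)+1 = 1 from rfl] at this
      rw [this, hγ8, max_eq_right (by rw [norm_pow]; nlinarith [hle2 0, norm_nonneg (y 0)])]
    have := hle2 1
    rw [h1] at this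
    norm_num at this

end Stmt8Aux


/-- If `φ_c(t) = t² - c` admits a rational periodic point of (least) period
`n ≥ 3`, then `den c` is divisible by `16`. -/
theorem stmt_8 (c : ℚ) (x : ℚ) (n : ℕ) (hn : 3 ≤ n)
    (h : Function.minimalPeriod (fun t : ℚ => t ^ 2 - c) x = n) :
    16 ∣ c.den := by
  by_contra h16
  have hden : c.den ≠ 0 := c.den_nz
  have hval : padicValNat 2 c.den ≤ 3 := by
    by_contra hv
    push_neg at hv
    have h4 : (2:ℕ)^4 ∣ c.den := by
      rw [Nat.Prime.pow_dvd_iff_le_factorization Nat.prime_two hden]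
      rw [Nat.factorization_def _ Nat.prime_two]
      omega
    norm_num at h4
    exact h16 h4
  have hc : ‖((c : ℚ) : ℚ_[2])‖ ≤ 8 := by
    rcases eq_or_ne c 0 with rfl | hc0
    · simp
    · rw [Padic.eq_padicNorm]
      have hnorm : padicNorm 2 c = (2:ℚ) ^ (-padicValRat 2 c) := by
        rw [padicNorm.eq_zpow_of_nonzero hc0]
        norm_num
      have hv : -padicValRat 2 c ≤ 3 := by
        rw [padicValRat_def]
        have h1 : (0:ℤ) ≤ padicValInt 2 c.num := Int.ofNat_nonneg _
        omega
      have h2 : padicNorm 2 c ≤ (2:ℚ)^(3:ℤ) := by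
        rw [hnorm]
        exact zpow_le_zpow_right₀ (by norm_num) hv
      have h3 : ((2:ℚ):ℝ)^(3:ℤ) = 8 := by norm_num
      calc (↑(padicNorm 2 c) : ℝ) ≤ ((2:ℚ)^(3:ℤ) : ℚ) := by exact_mod_cast h2
        _ = 8 := by norm_num
  exact absurd (Stmt8Aux.no_cycle c x n hn h hc) (fun hf => hf)
end

section
/- Let c = a/d² ∈ ℚ with a ∈ ℤ and d ∈ ℕ, where a and d are coprime. Let x be a rational preperiodic point of φ_c with den(x) = d and X = num(x). Then X² ≡ a (mod d). -/
/-- Let `c = a/d²` with `a, d` coprime, and let `x` be a rational preperiodic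
point of `φ_c(t) = t² - c` with `den x = d` and `X = num x`.
Then `X² ≡ a (mod d)`. -/
theorem stmt_9 (a : ℤ) (d : ℕ) (hd : 0 < d) (hcop : IsCoprime a (d : ℤ))
    (c : ℚ) (hc : c = (a : ℚ) / (d : ℚ) ^ 2)
    (x : ℚ)
    (hx : ∃ m : ℕ, ∃ n : ℕ, 1 ≤ n ∧
      (fun t : ℚ => t ^ 2 - c)^[n] ((fun t : ℚ => t ^ 2 - c)^[m] x) =
        (fun t : ℚ => t ^ 2 - c)^[m] x)
    (hden : x.den = d) :
    x.num ^ 2 ≡ a [ZMOD (d : ℤ)] := by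
  set F : ℚ → ℚ := fun t : ℚ => t ^ 2 - c with hFdef
  set K : ℤ := x.num ^ 2 - a with hKdef
  have hgoal : ((d : ℤ) ∣ K) → x.num ^ 2 ≡ a [ZMOD (d : ℤ)] := by
    intro h
    exact Int.modEq_iff_dvd.mpr (dvd_sub_comm.mp h)
  by_contra hcon
  have hK : ¬ (d : ℤ) ∣ K := fun h => hcon (hgoal h)
  -- K ≠ 0
  have hKne : K ≠ 0 := by
    intro h; exact hK (h ▸ dvd_zero _)
  have hKabs : ¬ d ∣ K.natAbs := by
    intro h; exact hK (Int.natCast_dvd_natCast.mpr h |>.trans (Int.natAbs_dvd.mpr dvd_rfl))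
  have hKabsne : K.natAbs ≠ 0 := Int.natAbs_ne_zero.mpr hKne
  -- obtain a prime p with v_p(K) < v_p(d)
  have hnotle : ¬ d.factorization ≤ K.natAbs.factorization := by
    intro h; exact hKabs ((Nat.factorization_le_iff_dvd hd.ne' hKabsne).mp h)
  rw [Finsupp.le_def] at hnotle
  push_neg at hnotle
  obtain ⟨p, hp⟩ := hnotle
  have hpmem : p ∈ d.primeFactors := by
    rw [← Nat.support_factorization]
    exact Finsupp.mem_support_iff.mpr (by omega)
  have pp : p.Prime := Nat.prime_of_mem_primeFactors hpmem
  haveI : Fact p.Prime := ⟨pp⟩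
  have hpd : p ∣ d := Nat.dvd_of_mem_primeFactors hpmem
  set e : ℕ := padicValNat p d with hedef
  set t : ℕ := padicValNat p K.natAbs with htdef
  have hte : t < e := by
    have h1 := Nat.factorization_def d pp
    have h2 := Nat.factorization_def K.natAbs pp
    omega
  have he1 : 1 ≤ e := one_le_padicValNat_of_dvd hd.ne' hpd
  -- p does not divide a
  have hpa : ¬ (p : ℤ) ∣ a := by
    intro h
    have hpdz : (p : ℤ) ∣ (d : ℤ) := Int.natCast_dvd_natCast.mpr hpd
    exact (Int.prime_iff_natAbs_prime.mpr (by simpa using pp)).not_unit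
      (hcop.isUnit_of_dvd' h hpdz)
  have ha0 : a ≠ 0 := by rintro rfl; exact hpa (dvd_zero _)
  -- p does not divide x.num
  have hpx : ¬ (p : ℤ) ∣ x.num := by
    intro h
    have h1 : p ∣ x.num.natAbs := Int.natCast_dvd_natCast.mp (Int.dvd_natAbs.mpr h)
    have h2 : p ∣ Nat.gcd x.num.natAbs x.den := Nat.dvd_gcd h1 (hden ▸ hpd)
    rw [x.reduced] at h2
    exact pp.one_lt.ne' (Nat.dvd_one.mp h2)
  have hx0 : x ≠ 0 := by
    intro h; apply hpx; rw [h]; simp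
  have hdq : (d : ℚ) ≠ 0 := Nat.cast_ne_zero.mpr hd.ne'
  have hdq2 : ((d : ℚ)) ^ 2 ≠ 0 := pow_ne_zero _ hdq
  have haq : (a : ℚ) ≠ 0 := Int.cast_ne_zero.mpr ha0
  have hc0 : c ≠ 0 := by rw [hc]; exact div_ne_zero haq hdq2
  -- valuations
  have vd : padicValRat p (d : ℚ) = (e : ℤ) := by
    rw [padicValRat.of_nat]
  have vc : padicValRat p c = -(2 * (e : ℤ)) := by
    rw [hc, padicValRat.div haq hdq2, padicValRat.pow (d : ℚ), vd, padicValRat.of_int,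
      padicValInt.eq_zero_of_not_dvd hpa]
    push_cast; ring
  have vx : padicValRat p x = -(e : ℤ) := by
    rw [padicValRat_def, padicValInt.eq_zero_of_not_dvd hpx, hden]
    simp
    rfl
  -- key step
  have key : ∀ z : ℚ, z ≠ 0 → padicValRat p z < -(e : ℤ) →
      (F z ≠ 0 ∧ padicValRat p (F z) = 2 * padicValRat p z) := by
    intro z hz hvz
    have hz2 : z ^ 2 ≠ 0 := pow_ne_zero _ hz
    have hvz2 : padicValRat p (z ^ 2) = 2 * padicValRat p z := by
      rw [padicValRat.pow z]; push_cast; ring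
    have hlt : padicValRat p (z ^ 2) < padicValRat p c := by
      rw [hvz2, vc]; linarith
    have hne : F z ≠ 0 := by
      intro h
      have hzc : z ^ 2 = c := by
        have : z ^ 2 - c = 0 := h
        linarith [this]
      rw [hzc] at hlt; exact lt_irrefl _ hlt
    refine ⟨hne, ?_⟩
    have hmin := padicValRat.add_eq_min (p := p) (q := z ^ 2) (r := -c)
      (by rw [← sub_eq_add_neg]; exact hne) hz2 (neg_ne_zero.mpr hc0)
      (by rw [padicValRat.neg]; exact ne_of_lt hlt)
    rw [← sub_eq_add_neg] at hmin
    show padicValRat p (z ^ 2 - c) = _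
    rw [hmin, padicValRat.neg, min_eq_left hlt.le, hvz2]
  -- valuation of F x
  have hfx : F x = ((K : ℤ) : ℚ) / (d : ℚ) ^ 2 := by
    show x ^ 2 - c = _
    conv_lhs => rw [← Rat.num_div_den x]
    rw [hden, hc, hKdef]
    push_cast
    field_simp
  have hKq : ((K : ℤ) : ℚ) ≠ 0 := Int.cast_ne_zero.mpr hKne
  have hfx0 : F x ≠ 0 := by rw [hfx]; exact div_ne_zero hKq hdq2
  have vK : padicValRat p ((K : ℤ) : ℚ) = (t : ℤ) := by
    rw [padicValRat.of_int]; rfl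
  have vfx : padicValRat p (F x) = (t : ℤ) - 2 * (e : ℤ) := by
    rw [hfx, padicValRat.div hKq hdq2, padicValRat.pow (d : ℚ), vK, vd]
    push_cast; ring
  -- induction: all iterates beyond the first are nonzero with small valuation
  have main : ∀ k : ℕ, F^[k + 1] x ≠ 0 ∧ padicValRat p (F^[k + 1] x) < -(e : ℤ) := by
    intro k
    induction k with
    | zero =>
      refine ⟨by simpa using hfx0, ?_⟩
      have : F^[1] x = F x := Function.iterate_one F ▸ rfl
      rw [this, vfx]
      have : (t : ℤ) < (e : ℤ) := by exact_mod_cast hte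
      linarith
    | succ k ih =>
      have hk := key _ ih.1 ih.2
      rw [Function.iterate_succ_apply']
      refine ⟨hk.1, ?_⟩
      rw [hk.2]
      linarith [ih.2, (by exact_mod_cast he1 : (1 : ℤ) ≤ (e : ℤ))]
  have strict : ∀ k : ℕ, padicValRat p (F^[k + 1 + 1] x) < padicValRat p (F^[k + 1] x) := by
    intro k
    have h1 := main k
    have h2 := (key _ h1.1 h1.2).2
    rw [Function.iterate_succ_apply', h2]
    have he : (1 : ℤ) ≤ (e : ℤ) := by exact_mod_cast he1
    linarith [h1.2]
  have ganti : StrictAnti (fun k : ℕ => padicValRat p (F^[k + 1] x)) :=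
    strictAnti_nat_of_succ_lt (fun k => strict k)
  -- use preperiodicity to get a contradiction
  obtain ⟨m, n, hn1, hper⟩ := hx
  obtain ⟨n', rfl⟩ : ∃ n', n = n' + 1 := ⟨n - 1, by omega⟩
  have e1 : F^[(n' + 1) + m] x = F^[m] x := by
    rw [Function.iterate_add_apply]; exact hper
  have e2 : F^[(n' + 1) + ((n' + 1) + m)] x = F^[m] x := by
    rw [Function.iterate_add_apply, e1]; exact hper
  have eq1 : F^[(n' + m) + 1] x = F^[m] x := by
    rw [show n' + m + 1 = (n' + 1) + m by ring]; exact e1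
  have eq2 : F^[(n' + (n' + 1) + m) + 1] x = F^[m] x := by
    rw [show n' + (n' + 1) + m + 1 = (n' + 1) + ((n' + 1) + m) by ring]; exact e2
  have : (n' + m) = (n' + (n' + 1) + m) := by
    apply ganti.injective
    show padicValRat p (F^[(n' + m) + 1] x) = padicValRat p (F^[(n' + (n' + 1) + m) + 1] x)
    rw [eq1, eq2]
  omega
end

section
/- Let c ∈ ℚ with den(c) = d² where d is a positive integer divisible by 4. Let x, y be rational preperiodic points of φ_c, with numerators X = num(x) and Y = num(y). Let p be a prime dividing d and let r = v_p(d) be the p-adic valuation of d. Then X ≡ Y (mod p^r) or X ≡ −Y (mod p^r). -/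
private def Preper (c x : ℚ) : Prop :=
  ∃ m : ℕ, ∃ n : ℕ, 1 ≤ n ∧
    (fun t : ℚ => t ^ 2 - c)^[n] ((fun t : ℚ => t ^ 2 - c)^[m] x) =
      (fun t : ℚ => t ^ 2 - c)^[m] x

private lemma preper_step {c x : ℚ} (hx : Preper c x) : Preper c (x ^ 2 - c) := by
  obtain ⟨m, n, hn, heq⟩ := hx
  refine ⟨m, n, hn, ?_⟩
  have e : ∀ k : ℕ, (fun t : ℚ => t ^ 2 - c)^[k] (x ^ 2 - c) =
      (fun t : ℚ => t ^ 2 - c)^[k + 1] x :=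
    fun k => (Function.iterate_succ_apply _ k x).symm
  rw [e, ← Function.iterate_add_apply]
  have hadd : n + (m + 1) = (n + m) + 1 := by ring
  rw [hadd, Function.iterate_succ_apply', Function.iterate_succ_apply']
  have h5 : (fun t : ℚ => t ^ 2 - c)^[n + m] x = (fun t : ℚ => t ^ 2 - c)^[m] x := by
    rw [Function.iterate_add_apply]
    exact heq
  rw [h5]

private lemma val_sq {p : ℕ} [Fact p.Prime] {x : ℚ} (hx0 : x ≠ 0) :
    padicValRat p (x ^ 2) = 2 * padicValRat p x := by
  rw [padicValRat.pow x]
  push_cast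
  ring

private lemma step_lt {p : ℕ} [Fact p.Prime] {c : ℚ} (hc0 : c ≠ 0) {x : ℚ} (hx0 : x ≠ 0)
    (hlt : 2 * padicValRat p x < padicValRat p c) :
    x ^ 2 - c ≠ 0 ∧ padicValRat p (x ^ 2 - c) = 2 * padicValRat p x := by
  have hx2 : x ^ 2 ≠ 0 := pow_ne_zero _ hx0
  have hv2 : padicValRat p (x ^ 2) = 2 * padicValRat p x := val_sq hx0
  have hne : x ^ 2 - c ≠ 0 := by
    intro h
    rw [sub_eq_zero] at h
    rw [h] at hv2
    omega
  refine ⟨hne, ?_⟩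
  rw [sub_eq_add_neg]
  rw [padicValRat.add_eq_of_lt (by rwa [← sub_eq_add_neg]) hx2 (neg_ne_zero.2 hc0)
    (by rw [padicValRat.neg, hv2]; exact hlt)]
  exact hv2

private lemma step_gt {p : ℕ} [Fact p.Prime] {c : ℚ} (hc0 : c ≠ 0) {x : ℚ}
    (h : x = 0 ∨ (x ≠ 0 ∧ padicValRat p c < 2 * padicValRat p x)) :
    x ^ 2 - c ≠ 0 ∧ padicValRat p (x ^ 2 - c) = padicValRat p c := by
  rcases h with h0 | ⟨hx0, hgt⟩
  · subst h0
    constructor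
    · simpa using hc0
    · norm_num
  · have hx2 : x ^ 2 ≠ 0 := pow_ne_zero _ hx0
    have hv2 : padicValRat p (x ^ 2) = 2 * padicValRat p x := val_sq hx0
    have hne : x ^ 2 - c ≠ 0 := by
      intro h
      rw [sub_eq_zero] at h
      rw [h] at hv2
      omega
    refine ⟨hne, ?_⟩
    have heq : x ^ 2 - c = -c + x ^ 2 := by ring
    rw [heq]
    rw [padicValRat.add_eq_of_lt (by rw [← heq]; exact hne) (neg_ne_zero.2 hc0) hx2
      (by rw [padicValRat.neg, hv2]; exact hgt)]
    exact padicValRat.neg c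

private lemma key {p : ℕ} [Fact p.Prime] {c : ℚ} (hc0 : c ≠ 0) {T : ℤ} (hT : T ≤ 0)
    (hTc : 2 * T ≤ padicValRat p c) :
    ∀ (k : ℕ) (x : ℚ), x ≠ 0 → padicValRat p x < T →
      (fun t : ℚ => t ^ 2 - c)^[k] x ≠ 0 ∧
      padicValRat p ((fun t : ℚ => t ^ 2 - c)^[k] x) < T ∧
      padicValRat p ((fun t : ℚ => t ^ 2 - c)^[k] x) ≤ padicValRat p x - k := by
  intro k
  induction k with
  | zero =>
    intro x hx0 hxT
    simpa using ⟨hx0, hxT⟩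
  | succ k ih =>
    intro x hx0 hxT
    have hlt : 2 * padicValRat p x < padicValRat p c := by omega
    obtain ⟨hne, hval⟩ := step_lt hc0 hx0 hlt
    have hxT' : padicValRat p (x ^ 2 - c) < T := by omega
    obtain ⟨h1, h2, h3⟩ := ih (x ^ 2 - c) hne hxT'
    rw [Function.iterate_succ_apply]
    refine ⟨h1, h2, ?_⟩
    have := h3
    rw [hval] at this
    omega

private lemma preper_val {p : ℕ} [Fact p.Prime] {c : ℚ} (hc0 : c ≠ 0) {T : ℤ} (hT : T ≤ 0)
    (hTc : 2 * T ≤ padicValRat p c) {x : ℚ} (hx : Preper c x) :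
    x = 0 ∨ T ≤ padicValRat p x := by
  by_contra h
  push_neg at h
  obtain ⟨hx0, hxT⟩ := h
  obtain ⟨m, n, hn, heq⟩ := hx
  obtain ⟨hz0, hzT, -⟩ := key hc0 hT hTc m x hx0 hxT
  obtain ⟨-, -, h3⟩ := key hc0 hT hTc n _ hz0 hzT
  rw [heq] at h3
  omega

private lemma den_val {p : ℕ} [hpf : Fact p.Prime] {c : ℚ} {d : ℕ} (hd : 0 < d)
    (hden : c.den = d ^ 2) (hpd : p ∣ d) {x : ℚ} (hx : Preper c x) :
    padicValNat p x.den = padicValNat p d ∧ ¬ (p : ℤ) ∣ x.num := by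
  have hp := hpf.out
  set r := padicValNat p d with hrdef
  have hr1 : 1 ≤ r := one_le_padicValNat_of_dvd hd.ne' hpd
  have hc0 : c ≠ 0 := by
    intro h
    rw [h] at hden
    simp only [Rat.den_ofNat] at hden
    have hd1 : d = 1 := by
      by_contra hne1
      have h2 : 2 ≤ d := by omega
      have h3 := Nat.pow_le_pow_left h2 2
      omega
    rw [hd1] at hpd
    exact hp.ne_one (Nat.dvd_one.mp hpd)
  have hdenv : padicValNat p c.den = 2 * r := by
    rw [hden, padicValNat.pow d 2]
  have hpnum : ¬ (p : ℤ) ∣ c.num := by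
    intro hdvd
    have h1 : p ∣ c.num.natAbs := Int.natCast_dvd.mp hdvd
    have hpden : p ∣ c.den := by
      rw [dvd_iff_padicValNat_ne_zero c.den_ne_zero]
      omega
    have h2 : p ∣ 1 := c.reduced ▸ Nat.dvd_gcd h1 hpden
    exact hp.ne_one (Nat.dvd_one.mp h2)
  have hvc : padicValRat p c = -(2 * (r : ℤ)) := by
    rw [padicValRat_def, padicValInt.eq_zero_of_not_dvd hpnum, hdenv]
    push_cast
    ring
  have hT : -(r : ℤ) ≤ 0 := by omega
  have hTc : 2 * (-(r : ℤ)) ≤ padicValRat p c := by rw [hvc]; ring_nf; omega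
  have hxv := preper_val hc0 hT hTc hx
  have hxstep : Preper c (x ^ 2 - c) := preper_step hx
  have hnotbig : ¬ (x = 0 ∨ (x ≠ 0 ∧ padicValRat p c < 2 * padicValRat p x)) := by
    intro h
    obtain ⟨hne, hval⟩ := step_gt hc0 h
    rcases preper_val hc0 hT hTc hxstep with h0 | hge
    · exact hne h0
    · rw [hval, hvc] at hge
      omega
  have hx0 : x ≠ 0 := fun h => hnotbig (Or.inl h)
  have hvx : padicValRat p x = -(r : ℤ) := by
    rcases hxv with h0 | hge
    · exact absurd (Or.inl h0) hnotbig
    · have hle : 2 * padicValRat p x ≤ padicValRat p c := by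
        by_contra hlt
        push_neg at hlt
        exact hnotbig (Or.inr ⟨hx0, hlt⟩)
      rw [hvc] at hle
      omega
  rw [padicValRat_def] at hvx
  have hpxden : p ∣ x.den := by
    rw [dvd_iff_padicValNat_ne_zero x.den_ne_zero]
    omega
  have hpxnum : ¬ (p : ℤ) ∣ x.num := by
    intro hdvd
    have h1 : p ∣ x.num.natAbs := Int.natCast_dvd.mp hdvd
    have h2 : p ∣ 1 := x.reduced ▸ Nat.dvd_gcd h1 hpxden
    exact hp.ne_one (Nat.dvd_one.mp h2)
  have hzero : padicValInt p x.num = 0 := padicValInt.eq_zero_of_not_dvd hpxnum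
  refine ⟨by omega, hpxnum⟩

private lemma den_val_zero {p : ℕ} [hpf : Fact p.Prime] {c : ℚ} {d : ℕ} (hc0 : c ≠ 0)
    (hden : c.den = d ^ 2) (hpd : ¬ p ∣ d) {x : ℚ} (hx : Preper c x) :
    padicValNat p x.den = 0 := by
  have hp := hpf.out
  have hvc : 0 ≤ padicValRat p c := by
    have h1 : ¬ p ∣ c.den := by
      rw [hden]
      intro h
      exact hpd (hp.dvd_of_dvd_pow h)
    have h2 : padicValNat p c.den = 0 := padicValNat.eq_zero_of_not_dvd h1
    rw [padicValRat_def, h2]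
    omega
  rcases preper_val (p := p) hc0 (le_refl (0 : ℤ)) (by simpa using hvc) hx with h0 | hge
  · rw [h0]
    simp
  · by_contra hne
    have hpxden : p ∣ x.den := (dvd_iff_padicValNat_ne_zero x.den_ne_zero).mpr hne
    have hpxnum : ¬ (p : ℤ) ∣ x.num := by
      intro hdvd
      have h1 : p ∣ x.num.natAbs := Int.natCast_dvd.mp hdvd
      have h2 : p ∣ 1 := x.reduced ▸ Nat.dvd_gcd h1 hpxden
      exact hp.ne_one (Nat.dvd_one.mp h2)
    have hzero : padicValInt p x.num = 0 := padicValInt.eq_zero_of_not_dvd hpxnum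
    rw [padicValRat_def, hzero] at hge
    omega

private lemma den_eq_s10 {c : ℚ} {d : ℕ} (hd : 0 < d) (hd1 : 1 < d) (hden : c.den = d ^ 2)
    {x : ℚ} (hx : Preper c x) : x.den = d := by
  have hc0 : c ≠ 0 := by
    intro h
    rw [h] at hden
    simp only [Rat.den_ofNat] at hden
    have h2 : 2 ≤ d := hd1
    have h3 := Nat.pow_le_pow_left h2 2
    omega
  rw [Nat.eq_iff_prime_padicValNat_eq _ _ x.den_ne_zero hd.ne']
  intro q hq
  haveI : Fact q.Prime := ⟨hq⟩
  by_cases hqd : q ∣ d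
  · exact (den_val hd hden hqd hx).1
  · rw [den_val_zero hc0 hden hqd hx, padicValNat.eq_zero_of_not_dvd hqd]

private lemma num_eq {c : ℚ} {d : ℕ} (hden : c.den = d ^ 2)
    {x : ℚ} (hxd : x.den = d) (hfd : (x ^ 2 - c).den = d) :
    (x ^ 2 - c).num * (d : ℤ) = x.num ^ 2 - c.num := by
  have key : ∀ z : ℚ, (z.num : ℚ) = z * (z.den : ℚ) := fun z =>
    (div_eq_iff (by exact_mod_cast z.den_ne_zero)).mp (Rat.num_div_den z)
  have hc : (c.num : ℚ) = c * ((d : ℚ)) ^ 2 := by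
    have h := key c
    rw [hden] at h
    push_cast at h
    exact h
  have hx' : (x.num : ℚ) = x * (d : ℚ) := by
    have h := key x
    rw [hxd] at h
    exact h
  have hf : ((x ^ 2 - c).num : ℚ) = (x ^ 2 - c) * (d : ℚ) := by
    have h := key (x ^ 2 - c)
    rw [hfd] at h
    exact h
  have main : (((x ^ 2 - c).num * (d : ℤ) : ℤ) : ℚ) = ((x.num ^ 2 - c.num : ℤ) : ℚ) := by
    push_cast
    rw [hf, hx', hc]
    ring
  exact_mod_cast main

/-- Let `den c = d²` with `4 ∣ d`, `d > 0`. Let `x, y` be rational preperiodic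
points of `φ_c(t) = t² - c`, `X = num x`, `Y = num y`, `p` a prime dividing `d`
and `r = v_p(d)`. Then `X ≡ ± Y (mod p^r)`. -/
theorem stmt_10 (c : ℚ) (d : ℕ) (hd : 0 < d) (h4 : 4 ∣ d) (hden : c.den = d ^ 2)
    (x y : ℚ)
    (hx : ∃ m : ℕ, ∃ n : ℕ, 1 ≤ n ∧
      (fun t : ℚ => t ^ 2 - c)^[n] ((fun t : ℚ => t ^ 2 - c)^[m] x) =
        (fun t : ℚ => t ^ 2 - c)^[m] x)
    (hy : ∃ m : ℕ, ∃ n : ℕ, 1 ≤ n ∧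
      (fun t : ℚ => t ^ 2 - c)^[n] ((fun t : ℚ => t ^ 2 - c)^[m] y) =
        (fun t : ℚ => t ^ 2 - c)^[m] y)
    (p : ℕ) (hp : p.Prime) (hpd : p ∣ d) :
    x.num ≡ y.num [ZMOD ((p : ℤ) ^ padicValNat p d)] ∨
      x.num ≡ -y.num [ZMOD ((p : ℤ) ^ padicValNat p d)] := by
  haveI : Fact p.Prime := ⟨hp⟩
  have hd4 : 4 ≤ d := Nat.le_of_dvd hd h4
  have hd1 : 1 < d := by omega
  have hxp : Preper c x := hx
  have hyp : Preper c y := hy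
  have hfxp : Preper c (x ^ 2 - c) := preper_step hxp
  have hfyp : Preper c (y ^ 2 - c) := preper_step hyp
  have hdx : x.den = d := den_eq_s10 hd hd1 hden hxp
  have hdy : y.den = d := den_eq_s10 hd hd1 hden hyp
  have hdfx : (x ^ 2 - c).den = d := den_eq_s10 hd hd1 hden hfxp
  have hdfy : (y ^ 2 - c).den = d := den_eq_s10 hd hd1 hden hfyp
  have hX : (x ^ 2 - c).num * (d : ℤ) = x.num ^ 2 - c.num := num_eq hden hdx hdfx
  have hY : (y ^ 2 - c).num * (d : ℤ) = y.num ^ 2 - c.num := num_eq hden hdy hdfy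
  have hpX : ¬ (p : ℤ) ∣ x.num := (den_val hd hden hpd hxp).2
  have hpY : ¬ (p : ℤ) ∣ y.num := (den_val hd hden hpd hyp).2
  set r := padicValNat p d with hrdef
  have hprd : (p : ℤ) ^ r ∣ (d : ℤ) := by
    have h := pow_padicValNat_dvd (p := p) (n := d)
    exact_mod_cast Int.natCast_dvd_natCast.mpr h
  have hfact : (x.num - y.num) * (x.num + y.num) =
      ((x ^ 2 - c).num - (y ^ 2 - c).num) * (d : ℤ) := by
    linear_combination hY - hX
  have hprime : Prime ((p : ℤ)) := Nat.prime_iff_prime_int.mp hp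
  by_cases hp2 : p = 2
  · -- p = 2
    subst hp2
    have hr2 : 2 ≤ r := by
      have h42 : (2 : ℕ) ^ 2 ∣ d := by norm_num [h4]
      have := (Nat.Prime.pow_dvd_iff_le_factorization hp (by omega : d ≠ 0)).mp h42
      rwa [Nat.factorization_def _ hp] at this
    have h2c : ((2 : ℕ) : ℤ) = (2 : ℤ) := by norm_num
    rw [h2c]
    have hpX' : ¬ (2 : ℤ) ∣ (x ^ 2 - c).num := by
      have := (den_val hd hden hpd hfxp).2
      rwa [h2c] at this
    have hpY' : ¬ (2 : ℤ) ∣ (y ^ 2 - c).num := by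
      have := (den_val hd hden hpd hfyp).2
      rwa [h2c] at this
    have hpX2 : ¬ (2 : ℤ) ∣ x.num := by rwa [h2c] at hpX
    have hpY2 : ¬ (2 : ℤ) ∣ y.num := by rwa [h2c] at hpY
    have h2XY' : (2 : ℤ) ∣ ((x ^ 2 - c).num - (y ^ 2 - c).num) := by omega
    have hprd2 : (2 : ℤ) ^ r ∣ (d : ℤ) := by rwa [h2c] at hprd
    have hbig : (2 : ℤ) ^ (r + 1) ∣ (x.num - y.num) * (x.num + y.num) := by
      rw [hfact]
      calc (2 : ℤ) ^ (r + 1) = 2 * (2 : ℤ) ^ r := by rw [pow_succ]; ring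
      _ ∣ ((x ^ 2 - c).num - (y ^ 2 - c).num) * (d : ℤ) := mul_dvd_mul h2XY' hprd2
    obtain ⟨a', ha⟩ : (2 : ℤ) ∣ x.num - y.num := by omega
    obtain ⟨b', hb⟩ : (2 : ℤ) ∣ x.num + y.num := by omega
    have hdvd' : (2 : ℤ) ^ (r - 1) ∣ a' * b' := by
      have h4ab : (2 : ℤ) ^ (r + 1) ∣ 4 * (a' * b') := by
        have heq4 : 4 * (a' * b') = (x.num - y.num) * (x.num + y.num) := by
          rw [ha, hb]; ring
        rw [heq4]
        exact hbig
      have hsplit : (2 : ℤ) ^ (r + 1) = 4 * 2 ^ (r - 1) := by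
        have hre : r + 1 = 2 + (r - 1) := by omega
        rw [hre, pow_add]
        norm_num
      rw [hsplit] at h4ab
      exact (mul_dvd_mul_iff_left (by norm_num : (4 : ℤ) ≠ 0)).mp h4ab
    have hprime2 : Prime (2 : ℤ) := Int.prime_two
    by_cases hao : (2 : ℤ) ∣ a'
    · -- a' even, so b' odd, hence 2^(r-1) ∣ a', so 2^r ∣ X - Y
      have hbodd : ¬ (2 : ℤ) ∣ b' := by omega
      have hco : IsCoprime ((2 : ℤ) ^ (r - 1)) b' :=
        (hprime2.coprime_iff_not_dvd.mpr hbodd).pow_left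
      have hda : (2 : ℤ) ^ (r - 1) ∣ a' := hco.dvd_of_dvd_mul_right hdvd'
      have hdXY : (2 : ℤ) ^ r ∣ x.num - y.num := by
        have hre : r = 1 + (r - 1) := by omega
        rw [ha, hre, pow_add, pow_one]
        exact mul_dvd_mul_left 2 hda
      left
      have hdv2 : (2 : ℤ) ^ r ∣ y.num - x.num := by
        have heq2 : y.num - x.num = -(x.num - y.num) := by ring
        rw [heq2]
        exact hdXY.neg_right
      exact Int.modEq_iff_dvd.mpr hdv2
    · -- a' odd, so 2^(r-1) ∣ b', so 2^r ∣ X + Y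
      have hco : IsCoprime ((2 : ℤ) ^ (r - 1)) a' :=
        (hprime2.coprime_iff_not_dvd.mpr hao).pow_left
      have hdb : (2 : ℤ) ^ (r - 1) ∣ b' := hco.dvd_of_dvd_mul_left hdvd'
      have hdXY : (2 : ℤ) ^ r ∣ x.num + y.num := by
        have hre : r = 1 + (r - 1) := by omega
        rw [hb, hre, pow_add, pow_one]
        exact mul_dvd_mul_left 2 hdb
      right
      have hdv2 : (2 : ℤ) ^ r ∣ -y.num - x.num := by
        have heq2 : -y.num - x.num = -(x.num + y.num) := by ring
        rw [heq2]
        exact hdXY.neg_right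
      exact Int.modEq_iff_dvd.mpr hdv2
  · -- p odd
    have hpdvd : (p : ℤ) ^ r ∣ (x.num - y.num) * (x.num + y.num) := by
      rw [hfact]
      exact Dvd.dvd.mul_left hprd _
    have hp2' : ¬ (p : ℤ) ∣ 2 := by
      intro h
      have h1 := Int.le_of_dvd (by norm_num) h
      have h2 : 2 ≤ p := hp.two_le
      have h3 : p ≠ 2 := hp2
      omega
    by_cases h1 : (p : ℤ) ∣ x.num + y.num
    · -- p ∤ X - Y
      have hnd : ¬ (p : ℤ) ∣ x.num - y.num := by
        intro h2
        have h3 : (p : ℤ) ∣ (x.num + y.num) + (x.num - y.num) := dvd_add h1 h2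
        have h4' : (x.num + y.num) + (x.num - y.num) = 2 * x.num := by ring
        rw [h4'] at h3
        rcases hprime.dvd_mul.mp h3 with h5 | h5
        · exact hp2' h5
        · exact hpX h5
      have hco : IsCoprime ((p : ℤ) ^ r) (x.num - y.num) :=
        (hprime.coprime_iff_not_dvd.mpr hnd).pow_left
      have hdv : (p : ℤ) ^ r ∣ x.num + y.num := hco.dvd_of_dvd_mul_left hpdvd
      right
      have : (p : ℤ) ^ r ∣ -y.num - x.num := by
        have heq2 : -y.num - x.num = -(x.num + y.num) := by ring
        rw [heq2]
        exact hdv.neg_right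
      exact Int.modEq_iff_dvd.mpr this
    · have hco : IsCoprime ((p : ℤ) ^ r) (x.num + y.num) :=
        (hprime.coprime_iff_not_dvd.mpr h1).pow_left
      have hdv : (p : ℤ) ^ r ∣ x.num - y.num := hco.dvd_of_dvd_mul_right hpdvd
      left
      have : (p : ℤ) ^ r ∣ y.num - x.num := by
        have heq2 : y.num - x.num = -(x.num - y.num) := by ring
        rw [heq2]
        exact hdv.neg_right
      exact Int.modEq_iff_dvd.mpr this
end

section
/- Let c ∈ ℚ with den(c) = d² where d is a positive integer divisible by 4. Let X, Y be distinct numerators of rational periodic points of φ_c. If X ≡ Y (mod d), then X + Y = 2 or X + Y = −2. -/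
section aux

variable {c : ℚ}

private lemma not_dvd_num {p : ℕ} (hp : p.Prime) {q : ℚ} (h : p ∣ q.den) :
    ¬ (p : ℤ) ∣ q.num := by
  intro hn
  have h1 : p ∣ q.num.natAbs := by
    have := Int.natAbs_dvd_natAbs.mpr hn
    simpa using this
  have h2 : p ∣ Nat.gcd q.num.natAbs q.den := Nat.dvd_gcd h1 h
  rw [q.reduced] at h2
  exact hp.ne_one (Nat.dvd_one.mp h2)

private lemma val_step {p : ℕ} [Fact p.Prime] (hc : c ≠ 0) {z : ℚ} (hz : z ≠ 0)
    (h2 : 2 * padicValRat p z < padicValRat p c) :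
    z ^ 2 - c ≠ 0 ∧ padicValRat p (z ^ 2 - c) = 2 * padicValRat p z := by
  have hz2 : z ^ 2 ≠ 0 := pow_ne_zero _ hz
  have hvz2 : padicValRat p (z ^ 2) = 2 * padicValRat p z := by
    simpa [mul_comm] using padicValRat.pow (p := p) hz (k := 2)
  have hne : z ^ 2 - c ≠ 0 := by
    intro h
    rw [sub_eq_zero] at h
    rw [h] at hvz2
    omega
  have hmin := padicValRat.add_eq_min (p := p) (q := z ^ 2) (r := -c)
    (by rwa [← sub_eq_add_neg]) hz2 (neg_ne_zero.2 hc)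
    (by rw [padicValRat.neg, hvz2]; omega)
  rw [← sub_eq_add_neg] at hmin
  rw [padicValRat.neg, hvz2] at hmin
  exact ⟨hne, by rw [hmin, min_eq_left (le_of_lt h2)]⟩

private lemma val_escape {p : ℕ} [Fact p.Prime] (hc : c ≠ 0) {z : ℚ} (hz : z ≠ 0)
    (h1 : padicValRat p z < 0) (h2 : 2 * padicValRat p z < padicValRat p c) :
    ∀ n : ℕ, (fun t : ℚ => t ^ 2 - c)^[n + 1] z ≠ 0 ∧
      padicValRat p ((fun t : ℚ => t ^ 2 - c)^[n + 1] z) < padicValRat p z ∧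
      2 * padicValRat p ((fun t : ℚ => t ^ 2 - c)^[n + 1] z) < padicValRat p c := by
  intro n
  induction n with
  | zero =>
    obtain ⟨h0, hv⟩ := val_step hc hz h2
    refine ⟨h0, ?_, ?_⟩ <;> simp only [zero_add, Function.iterate_one] <;> rw [hv] <;> omega
  | succ n ih =>
    obtain ⟨h0, hlt, h2'⟩ := ih
    obtain ⟨h0', hv'⟩ := val_step hc h0 h2'
    rw [Function.iterate_succ_apply']
    refine ⟨h0', by rw [hv']; omega, by rw [hv']; omega⟩

private lemma periodic_not_low (hc : c ≠ 0) {p : ℕ} [Fact p.Prime] {z : ℚ} (hz : z ≠ 0)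
    {n : ℕ} (hn : 1 ≤ n) (hper : (fun t : ℚ => t ^ 2 - c)^[n] z = z) :
    ¬ (padicValRat p z < 0 ∧ 2 * padicValRat p z < padicValRat p c) := by
  rintro ⟨h1, h2⟩
  obtain ⟨k, rfl⟩ := Nat.exists_eq_add_of_le hn
  have := (val_escape hc hz h1 h2 k).2.1
  rw [add_comm, hper] at this
  omega

private lemma periodic_den_nonzero {d : ℕ} (hd1 : 1 < d) (hden : c.den = d ^ 2) {z : ℚ}
    (hzne : z ≠ 0) {n : ℕ} (hn : 1 ≤ n)
    (hper : (fun t : ℚ => t ^ 2 - c)^[n] z = z) : z.den = d := by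
  have hc : c ≠ 0 := by
    intro h
    rw [h] at hden
    simp only [Rat.den_zero] at hden
    nlinarith
  have hd0 : d ≠ 0 := by omega
  rw [Nat.eq_iff_prime_padicValNat_eq z.den d z.pos.ne' hd0]
  intro p hp
  haveI : Fact p.Prime := ⟨hp⟩
  have key : ∀ q : ℚ, p ∣ q.den → q ≠ 0 →
      padicValRat p q = -(padicValNat p q.den : ℤ) := by
    intro q hpq hq
    rw [padicValRat_def, padicValInt.eq_zero_of_not_dvd (not_dvd_num hp hpq)]
    omega
  by_cases hpd : p ∣ d
  · -- p ∣ d : show padicValNat p z.den = m := padicValNat p d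
    set m := padicValNat p d with hm
    have hm1 : 1 ≤ m := one_le_padicValNat_of_dvd (by omega) hpd
    have hpcden : p ∣ c.den := by rw [hden]; exact hpd.trans (dvd_pow_self d two_ne_zero)
    have hvc : padicValRat p c = -(2 * m : ℤ) := by
      rw [key c hpcden hc, hden, padicValNat.pow d 2]
      omega
    -- v z ≥ -m
    have hge : -(m : ℤ) ≤ padicValRat p z := by
      by_contra hlt
      push_neg at hlt
      exact periodic_not_low (p := p) hc hzne hn hper ⟨by omega, by omega⟩
    -- v z ≤ -m
    have hle : padicValRat p z ≤ -(m : ℤ) := by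
      by_contra hgt
      push_neg at hgt
      have hz2 : z ^ 2 ≠ 0 := pow_ne_zero _ hzne
      have hvz2 : padicValRat p (z ^ 2) = 2 * padicValRat p z := by
        simpa [mul_comm] using padicValRat.pow (p := p) hzne (k := 2)
      have hw0 : z ^ 2 - c ≠ 0 := by
        intro h
        rw [sub_eq_zero] at h
        rw [h, hvc] at hvz2
        omega
      have hmin := padicValRat.add_eq_min (p := p) (q := z ^ 2) (r := -c)
        (by rwa [← sub_eq_add_neg]) hz2 (neg_ne_zero.2 hc)
        (by rw [padicValRat.neg, hvz2, hvc]; omega)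
      rw [← sub_eq_add_neg, padicValRat.neg, hvz2, hvc] at hmin
      have hwval : padicValRat p (z ^ 2 - c) = -(2 * m : ℤ) := by
        rw [hmin]; exact min_eq_right (by omega)
      have hperw : (fun t : ℚ => t ^ 2 - c)^[n] (z ^ 2 - c) = z ^ 2 - c := by
        have h5 : (fun t : ℚ => t ^ 2 - c)^[n] ((fun t : ℚ => t ^ 2 - c) z)
            = (fun t : ℚ => t ^ 2 - c) z := by
          rw [← Function.iterate_succ_apply, Function.iterate_succ_apply', hper]
        exact h5
      exact periodic_not_low (p := p) hc hw0 hn hperw ⟨by omega, by omega⟩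
    have hvz : padicValRat p z = -(m : ℤ) := le_antisymm hle hge
    -- conclude padicValNat p z.den = m
    have hpzden : p ∣ z.den := by
      by_contra hnd
      have h1 : padicValNat p z.den = 0 := padicValNat.eq_zero_of_not_dvd hnd
      rw [padicValRat_def, h1] at hvz
      omega
    have := key z hpzden hzne
    rw [this] at hvz
    omega
  · -- p ∤ d
    have hm0 : padicValNat p d = 0 := padicValNat.eq_zero_of_not_dvd hpd
    rw [hm0]
    by_contra hne0
    have hpzden : p ∣ z.den := dvd_of_one_le_padicValNat (by omega)
    have hvz : padicValRat p z = -(padicValNat p z.den : ℤ) := key z hpzden hzne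
    have hvzneg : padicValRat p z < 0 := by
      rw [hvz]; omega
    have hvc : 0 ≤ padicValRat p c := by
      have hnd : ¬ p ∣ c.den := by
        rw [hden]
        intro h
        exact hpd (hp.dvd_of_dvd_pow h)
      rw [padicValRat_def, padicValNat.eq_zero_of_not_dvd hnd]
      omega
    exact periodic_not_low hc hzne hn hper ⟨hvzneg, by omega⟩

private lemma periodic_den {d : ℕ} (hd1 : 1 < d) (hden : c.den = d ^ 2) {z : ℚ}
    (hz : ∃ n : ℕ, 1 ≤ n ∧ (fun t : ℚ => t ^ 2 - c)^[n] z = z) : z.den = d := by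
  obtain ⟨n, hn, hper⟩ := hz
  rcases eq_or_ne z 0 with rfl | hzne
  · -- 0 periodic would make -c periodic with den d² = d, contradiction
    exfalso
    have hc : c ≠ 0 := by
      intro h
      rw [h] at hden
      simp only [Rat.den_zero] at hden
      nlinarith
    have hperw : (fun t : ℚ => t ^ 2 - c)^[n] ((fun t : ℚ => t ^ 2 - c) 0)
        = (fun t : ℚ => t ^ 2 - c) 0 := by
      rw [← Function.iterate_succ_apply, Function.iterate_succ_apply', hper]
    have hw : (fun t : ℚ => t ^ 2 - c) (0 : ℚ) = -c := by norm_num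
    rw [hw] at hperw
    have := periodic_den_nonzero hd1 hden (neg_ne_zero.2 hc) hn hperw
    rw [Rat.neg_den, hden] at this
    nlinarith
  · exact periodic_den_nonzero hd1 hden hzne hn hper

end aux

/-- Let `den c = d²` with `4 ∣ d`, `d > 0`. If `X ≠ Y` are numerators of
rational periodic points of `φ_c(t) = t² - c` and `X ≡ Y (mod d)`, then
`X + Y = ± 2`. -/
theorem stmt_12 (c : ℚ) (d : ℕ) (hd : 0 < d) (h4 : 4 ∣ d) (hden : c.den = d ^ 2)
    (x y : ℚ)
    (hx : ∃ n : ℕ, 1 ≤ n ∧ (fun t : ℚ => t ^ 2 - c)^[n] x = x)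
    (hy : ∃ n : ℕ, 1 ≤ n ∧ (fun t : ℚ => t ^ 2 - c)^[n] y = y)
    (hne : x.num ≠ y.num)
    (hmod : x.num ≡ y.num [ZMOD (d : ℤ)]) :
    x.num + y.num = 2 ∨ x.num + y.num = -2 := by
  set P : ℚ → ℚ := fun t : ℚ => t ^ 2 - c with hP
  have hd1 : 1 < d := by omega
  obtain ⟨n, hn, hxn⟩ := hx
  obtain ⟨m, hm, hyn⟩ := hy
  set N := n * m with hN
  have hN1 : 1 ≤ N := Nat.one_le_iff_ne_zero.mpr (by positivity)
  have hxN : P^[N] x = x := by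
    rw [hN, Function.iterate_mul]
    exact Function.iterate_fixed hxn m
  have hyN : P^[N] y = y := by
    rw [hN, mul_comm, Function.iterate_mul]
    exact Function.iterate_fixed hyn n
  -- every iterate is periodic, hence has denominator d
  have hdenx : ∀ i, (P^[i] x).den = d := by
    intro i
    refine periodic_den hd1 hden ⟨N, hN1, ?_⟩
    rw [← Function.iterate_add_apply, Nat.add_comm, Function.iterate_add_apply, hxN]
  have hdeny : ∀ i, (P^[i] y).den = d := by
    intro i
    refine periodic_den hd1 hden ⟨N, hN1, ?_⟩
    rw [← Function.iterate_add_apply, Nat.add_comm, Function.iterate_add_apply, hyN]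
  have hd0 : (d : ℚ) ≠ 0 := Nat.cast_ne_zero.mpr (by omega)
  have hnum : ∀ z : ℚ, z.den = d → (z.num : ℚ) = z * d := by
    intro z h
    have := Rat.num_div_den z
    rw [h] at this
    exact (div_eq_iff hd0).mp this
  -- telescoping product
  have htel : ∀ k, P^[k] x - P^[k] y
      = (x - y) * ∏ i ∈ Finset.range k, (P^[i] x + P^[i] y) := by
    intro k
    induction k with
    | zero => simp
    | succ k ih =>
      rw [Finset.prod_range_succ, Function.iterate_succ_apply', Function.iterate_succ_apply',
        ← mul_assoc, ← ih, hP]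
      ring
  have hxy : x - y ≠ 0 := by
    intro h
    rw [sub_eq_zero] at h
    exact hne (by rw [h])
  have hprod1 : ∏ i ∈ Finset.range N, (P^[i] x + P^[i] y) = 1 := by
    have := htel N
    rw [hxN, hyN] at this
    have h2 : (x - y) * ∏ i ∈ Finset.range N, (P^[i] x + P^[i] y) = (x - y) * 1 := by
      rw [mul_one, ← this]
    exact mul_left_cancel₀ hxy h2
  -- integer numerator sums
  have hcast : ∀ i, (((P^[i] x).num + (P^[i] y).num : ℤ) : ℚ)
      = (d : ℚ) * (P^[i] x + P^[i] y) := by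
    intro i
    push_cast
    rw [hnum _ (hdenx i), hnum _ (hdeny i)]
    ring
  have hprodZ : ∏ i ∈ Finset.range N, ((P^[i] x).num + (P^[i] y).num) = (d : ℤ) ^ N := by
    have : ((∏ i ∈ Finset.range N, ((P^[i] x).num + (P^[i] y).num) : ℤ) : ℚ)
        = ((d : ℤ) ^ N : ℤ) := by
      push_cast [hcast]
      rw [Finset.prod_mul_distrib, hprod1, Finset.prod_const, Finset.card_range, mul_one]
    exact_mod_cast this
  have hdvd : (x.num + y.num) ∣ (d : ℤ) ^ N := by
    rw [← hprodZ]
    have h0 : (P^[0] x).num + (P^[0] y).num = x.num + y.num := by simp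
    rw [← h0]
    exact Finset.dvd_prod_of_mem _ (Finset.mem_range.mpr (by omega))
  -- arithmetic conclusion
  have hxden : x.den = d := by simpa using hdenx 0
  have hyden : y.den = d := by simpa using hdeny 0
  have hdiff : (d : ℤ) ∣ x.num - y.num := by
    have h := hmod.dvd
    rw [show x.num - y.num = -(y.num - x.num) by ring]
    exact dvd_neg.mpr h
  have h4' : (4 : ℤ) ∣ x.num - y.num := by
    have h4d : (4 : ℤ) ∣ (d : ℤ) := by exact_mod_cast Int.natCast_dvd_natCast.mpr h4
    exact h4d.trans hdiff
  have hxodd : ¬ (2 : ℤ) ∣ x.num := by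
    apply not_dvd_num Nat.prime_two
    rw [hxden]
    omega
  obtain ⟨k, hk, hkodd⟩ : ∃ k : ℤ, x.num + y.num = 2 * k ∧ k % 2 = 1 := by
    obtain ⟨a, ha⟩ := h4'
    refine ⟨(x.num + y.num) / 2, by omega, by omega⟩
  have hkdvd : k ∣ (d : ℤ) ^ N := dvd_trans (Dvd.intro_left 2 rfl) (hk ▸ hdvd)
  have hkabs : k.natAbs = 1 := by
    by_contra habs
    have hk0 : k ≠ 0 := by
      intro h; rw [h] at hkodd; omega
    set q := k.natAbs.minFac with hq
    have hqp : q.Prime := Nat.minFac_prime habs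
    have hqk : (q : ℤ) ∣ k := by
      have h1 := Nat.minFac_dvd k.natAbs
      exact (Int.natCast_dvd_natCast.mpr h1).trans (Int.natAbs_dvd.mpr dvd_rfl)
    have hqd : q ∣ d := by
      have h1 : (q : ℤ) ∣ (d : ℤ) ^ N := hqk.trans hkdvd
      have h2 : q ∣ d ^ N := by exact_mod_cast h1
      exact hqp.dvd_of_dvd_pow h2
    have hqodd : q ≠ 2 := by
      intro h2
      have h3 : ((q : ℕ) : ℤ) ∣ k := hqk
      rw [h2] at h3
      have h5 : (2 : ℤ) ∣ k := by exact_mod_cast h3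
      omega
    -- q divides x.num + y.num and x.num - y.num, hence 2 * x.num
    have hq1 : (q : ℤ) ∣ x.num + y.num := hk ▸ hqk.mul_left 2
    have hq2 : (q : ℤ) ∣ x.num - y.num :=
      (Int.natCast_dvd_natCast.mpr hqd).trans hdiff
    have hq3 : (q : ℤ) ∣ 2 * x.num := by
      have : x.num + y.num + (x.num - y.num) = 2 * x.num := by ring
      rw [← this]
      exact dvd_add hq1 hq2
    have hqZ : Prime (q : ℤ) := Nat.prime_iff_prime_int.mp hqp
    have hq4 : (q : ℤ) ∣ x.num := by
      rcases hqZ.dvd_mul.mp hq3 with h | h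
      · exfalso
        have h6 : q ∣ 2 := by exact_mod_cast h
        exact hqodd ((Nat.prime_dvd_prime_iff_eq hqp Nat.prime_two).mp h6)
      · exact h
    exact not_dvd_num hqp (hxden ▸ hqd) hq4
  rcases Int.natAbs_eq_iff.mp hkabs with h | h
  · left; omega
  · right; omega
end
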